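/- arXiv:1806.06911 — 10 statements merged into one kernel-verified Lean document; each statement's English description precedes it below -/
import Mathlib

section
/- Let G be a finite group and let λ : G → Perm(G) be the left regular representation (λ(g)(h) = gh). Let N be a regular subgroup of Perm(G) (i.e., N acts transitively and fixed-point-freely on G) that is normalized by λ(G). If P is a subgroup of N that is normalized by λ(G) (i.e., λ(g)Pλ(g)⁻¹ = P for all g ∈ G), then the orbit of the identity element of G under P, namely Ψ(P) = {q(1_G) : q ∈ P}, is a subgroup of G, and its cardinality equals the cardinality of P. -/
/-- The left regular representation `λ : G → Perm(G)`, `λ(g)(h) = g * h`. -/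
def leftReg (G : Type*) [Group G] : G →* Equiv.Perm G :=
  MulAction.toPermHom G G

/-- A subgroup of `Perm(X)` is regular if it acts transitively and
fixed-point-freely on `X`: for all `x y` there is exactly one element sending
`x` to `y`. -/
def IsRegularSubgroup {X : Type*} (N : Subgroup (Equiv.Perm X)) : Prop :=
  ∀ x y : X, ∃! n : N, (n : Equiv.Perm X) x = y

/-- A subgroup `P ≤ Perm(G)` is normalized by `λ(G)` if
`λ(g) P λ(g)⁻¹ = P` for all `g ∈ G`. -/
def NormalizedByLeftReg {G : Type*} [Group G] (P : Subgroup (Equiv.Perm G)) : Prop :=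
  ∀ g : G, ∀ x : Equiv.Perm G, leftReg G g * x * (leftReg G g)⁻¹ ∈ P ↔ x ∈ P

theorem orbit_of_identity_is_subgroup_of_same_card
    {G : Type*} [Group G] [Fintype G]
    (N : Subgroup (Equiv.Perm G))
    (hreg : IsRegularSubgroup N) (hNnorm : NormalizedByLeftReg N)
    (P : Subgroup (Equiv.Perm G)) (hPN : P ≤ N)
    (hPnorm : NormalizedByLeftReg P) :
    (∃ J : Subgroup G,
        (J : Set G) = (fun q : Equiv.Perm G => q 1) '' (P : Set (Equiv.Perm G))) ∧
      ((fun q : Equiv.Perm G => q 1) '' (P : Set (Equiv.Perm G))).ncard = Nat.card P := by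
  constructor
  · refine ⟨⟨⟨⟨(fun q : Equiv.Perm G => q 1) '' (P : Set (Equiv.Perm G)), ?_⟩, ?_⟩, ?_⟩, rfl⟩
    · rintro _ _ ⟨p, hp, rfl⟩ ⟨q, hq, rfl⟩
      refine ⟨leftReg G (p 1) * q * (leftReg G (p 1))⁻¹ * p, mul_mem ((hPnorm (p 1) q).2 hq) hp, ?_⟩
      simp [leftReg, Equiv.Perm.mul_apply, Equiv.Perm.inv_def, MulAction.toPerm_symm_apply, smul_eq_mul, Equiv.symm_apply_apply]
    · exact ⟨1, P.one_mem, rfl⟩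
    · rintro _ ⟨p, hp, rfl⟩
      refine ⟨leftReg G (p 1)⁻¹ * p⁻¹ * (leftReg G (p 1)⁻¹)⁻¹,
        (hPnorm (p 1)⁻¹ p⁻¹).2 (inv_mem hp), ?_⟩
      simp [leftReg, Equiv.Perm.mul_apply, Equiv.Perm.inv_def, MulAction.toPerm_symm_apply, smul_eq_mul, Equiv.symm_apply_apply]
  · have hinj : Set.InjOn (fun q : Equiv.Perm G => q 1) (P : Set (Equiv.Perm G)) := by
      intro q hq q' hq' h
      obtain ⟨n, hn, huniq⟩ := hreg 1 (q 1)
      have h1 := huniq ⟨q, hPN hq⟩ rfl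
      have h2 := huniq ⟨q', hPN hq'⟩ h.symm
      have := h1.trans h2.symm
      exact congrArg Subtype.val this
    rw [Set.ncard_image_of_injOn hinj, ← Nat.card_coe_set_eq]
    rfl
end

section
/- Let G be a finite group, λ : G → Perm(G) the left regular representation, and N a regular subgroup of Perm(G) normalized by λ(G). Then the map Ψ, sending a subgroup P of N that is normalized by λ(G) to the subgroup {q(1_G) : q ∈ P} of G, is injective on the set of subgroups of N normalized by λ(G). -/
theorem psi_injective_on_normalized_subgroups
    {G : Type*} [Group G] [Fintype G]
    (N : Subgroup (Equiv.Perm G))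
    (hreg : IsRegularSubgroup N) (hNnorm : NormalizedByLeftReg N)
    (P Q : Subgroup (Equiv.Perm G)) (hPN : P ≤ N) (hQN : Q ≤ N)
    (hPnorm : NormalizedByLeftReg P) (hQnorm : NormalizedByLeftReg Q)
    (h : (fun q : Equiv.Perm G => q 1) '' (P : Set (Equiv.Perm G)) =
         (fun q : Equiv.Perm G => q 1) '' (Q : Set (Equiv.Perm G))) :
    P = Q := by
  have key : ∀ x y : Equiv.Perm G, x ∈ N → y ∈ N → x 1 = y 1 → x = y := by
    intro x y hx hy hxy
    obtain ⟨n, -, hu⟩ := hreg 1 (x 1)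
    have h1 : (⟨x, hx⟩ : N) = n := hu ⟨x, hx⟩ rfl
    have h2 : (⟨y, hy⟩ : N) = n := hu ⟨y, hy⟩ hxy.symm
    have := h1.trans h2.symm
    exact congrArg Subtype.val this
  ext p
  constructor
  · intro hp
    have : p 1 ∈ (fun q : Equiv.Perm G => q 1) '' (Q : Set (Equiv.Perm G)) := by
      rw [← h]; exact ⟨p, hp, rfl⟩
    obtain ⟨q, hq, hq1⟩ := this
    rw [key p q (hPN hp) (hQN hq) hq1.symm]
    exact hq
  · intro hp
    have : p 1 ∈ (fun q : Equiv.Perm G => q 1) '' (P : Set (Equiv.Perm G)) := by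
      rw [h]; exact ⟨p, hp, rfl⟩
    obtain ⟨q, hq, hq1⟩ := this
    rw [key p q (hQN hp) (hPN hq) hq1.symm]
    exact hq
end

section
/- Let G be a finite group, λ : G → Perm(G) the left regular representation, and N a regular subgroup of Perm(G) normalized by λ(G). Then for every natural number m dividing |G|, the number of characteristic subgroups of N of cardinality m is at most the number of subgroups of G of cardinality m. -/
section Aux
variable {G : Type*} [Group G]

@[simp] lemma leftReg_apply (g x : G) : leftReg G g x = g * x := rfl

@[simp] lemma leftReg_inv_apply (g x : G) : (leftReg G g)⁻¹ x = g⁻¹ * x := by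
  rw [← map_inv]; rfl

@[simp] lemma leftReg_symm_apply (g x : G) : (leftReg G g).symm x = g⁻¹ * x :=
  leftReg_inv_apply g x

/-- Conjugation by `λ(g)` as an automorphism of `N`. -/
def conjAutN (N : Subgroup (Equiv.Perm G)) (hN : NormalizedByLeftReg N) (g : G) : N ≃* N where
  toFun n := ⟨leftReg G g * n * (leftReg G g)⁻¹, (hN g n).mpr n.2⟩
  invFun n := ⟨(leftReg G g)⁻¹ * n * leftReg G g, (hN g _).mp (by
    simp [mul_assoc] )⟩
  left_inv n := by ext; simp [mul_assoc]
  right_inv n := by ext; simp [mul_assoc]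
  map_mul' a b := by ext; simp [mul_assoc]

lemma mem_of_char {N : Subgroup (Equiv.Perm G)} (hN : NormalizedByLeftReg N)
    {P : Subgroup N} (hP : P.Characteristic) (g : G) {n : N} (hn : n ∈ P) :
    conjAutN N hN g n ∈ P := by
  have h := hP.fixed (conjAutN N hN g)
  rw [← h] at hn
  exact hn

/-- The orbit of `1` under a characteristic subgroup `P` of `N`, as a subgroup of `G`. -/
def orbitSub (N : Subgroup (Equiv.Perm G)) (hN : NormalizedByLeftReg N)
    (P : Subgroup N) (hP : P.Characteristic) : Subgroup G where
  carrier := {g | ∃ n : N, n ∈ P ∧ (n : Equiv.Perm G) 1 = g}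
  one_mem' := ⟨1, P.one_mem, rfl⟩
  mul_mem' := by
    rintro a b ⟨n, hn, rfl⟩ ⟨n', hn', rfl⟩
    refine ⟨conjAutN N hN ((n : Equiv.Perm G) 1) n' * n,
      P.mul_mem (mem_of_char hN hP _ hn') hn, ?_⟩
    simp [conjAutN, mul_assoc]
  inv_mem' := by
    rintro a ⟨n, hn, rfl⟩
    refine ⟨conjAutN N hN ((n : Equiv.Perm G) 1)⁻¹ n⁻¹,
      mem_of_char hN hP _ (P.inv_mem hn), ?_⟩
    simp [conjAutN, mul_assoc]

end Aux

theorem card_charSub_le_card_sub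
    {G : Type*} [Group G] [Fintype G]
    (N : Subgroup (Equiv.Perm G))
    (hreg : IsRegularSubgroup N) (hNnorm : NormalizedByLeftReg N)
    (m : ℕ) (hm : m ∣ Nat.card G) :
    Nat.card {P : Subgroup N // P.Characteristic ∧ Nat.card P = m} ≤
      Nat.card {J : Subgroup G // Nat.card J = m} := by
  have huniq : ∀ (n n' : N), (n : Equiv.Perm G) 1 = (n' : Equiv.Perm G) 1 → n = n' := by
    intro n n' h
    obtain ⟨c, -, hu⟩ := hreg 1 ((n' : Equiv.Perm G) 1)
    exact (hu n h).trans (hu n' rfl).symm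
  have hcard : ∀ (P : Subgroup N) (hP : P.Characteristic),
      Nat.card (orbitSub N hNnorm P hP) = Nat.card P := by
    intro P hP
    symm
    apply Nat.card_eq_of_bijective (fun (p : P) =>
      (⟨((p : N) : Equiv.Perm G) 1, ⟨(p : N), p.2, rfl⟩⟩ : orbitSub N hNnorm P hP))
    constructor
    · intro p q h
      exact Subtype.ext (huniq (p : N) (q : N) (congrArg Subtype.val h))
    · rintro ⟨g, n, hn, rfl⟩
      exact ⟨⟨n, hn⟩, rfl⟩
  apply Nat.card_le_card_of_injective
    (fun P => (⟨orbitSub N hNnorm P.1 P.2.1, by rw [hcard P.1 P.2.1]; exact P.2.2⟩ :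
      {J : Subgroup G // Nat.card J = m}))
  rintro ⟨P, hP, hPm⟩ ⟨Q, hQ, hQm⟩ h
  simp only [Subtype.mk.injEq] at h ⊢
  have key : ∀ (P Q : Subgroup N) (hP : P.Characteristic) (hQ : Q.Characteristic),
      orbitSub N hNnorm P hP = orbitSub N hNnorm Q hQ → P ≤ Q := by
    intro P Q hP hQ h n hn
    have : (n : Equiv.Perm G) 1 ∈ orbitSub N hNnorm Q hQ := by
      rw [← h]; exact ⟨n, hn, rfl⟩
    obtain ⟨n', hn', hval⟩ := this
    rwa [huniq n n' hval.symm]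
  exact le_antisymm (key P Q hP hQ h) (key Q P hQ hP h.symm)
end

section
/- Let G and M be finite groups with |G| = |M|, and let λ : G → Perm(G) be the left regular representation. If there exists a natural number m dividing |G| such that the number of characteristic subgroups of M of cardinality m is strictly greater than the number of subgroups of G of cardinality m, then there is no regular subgroup N of Perm(G) that is isomorphic to M and normalized by λ(G); that is, R(G,[M]) is empty. -/
theorem R_empty_of_more_char_subgroups
    {G M : Type*} [Group G] [Fintype G] [Group M] [Fintype M]
    (hcard : Nat.card G = Nat.card M)
    (m : ℕ) (hm : m ∣ Nat.card G)
    (hgt : Nat.card {Q : Subgroup M // Q.Characteristic ∧ Nat.card Q = m} >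
           Nat.card {J : Subgroup G // Nat.card J = m}) :
    ¬ ∃ N : Subgroup (Equiv.Perm G),
        IsRegularSubgroup N ∧ NormalizedByLeftReg N ∧ Nonempty (N ≃* M) := by
  rintro ⟨N, hreg, hnorm, ⟨e⟩⟩
  set f : M →* Equiv.Perm G := N.subtype.comp e.symm.toMonoidHom with hfdef
  have hfinj : Function.Injective f := Subtype.coe_injective.comp e.symm.injective
  have hmemN : ∀ q : M, f q ∈ N := fun q => (e.symm q).2
  -- evaluation at 1 separates points
  have hkey : ∀ q q' : M, f q 1 = f q' 1 → q = q' := by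
    intro q q' h
    have hu := hreg 1 (f q' 1)
    have h1 : (⟨f q, hmemN q⟩ : N) = ⟨f q', hmemN q'⟩ := hu.unique h rfl
    exact hfinj (congrArg Subtype.val h1)
  -- conjugation automorphism of N
  have hconjmem : ∀ (g : G) (n : N), leftReg G g * (n : Equiv.Perm G) * (leftReg G g)⁻¹ ∈ N :=
    fun g n => (hnorm g n).mpr n.2
  let conjAut : G → (N ≃* N) := fun g =>
    { toFun := fun n => ⟨leftReg G g * (n : Equiv.Perm G) * (leftReg G g)⁻¹, hconjmem g n⟩
      invFun := fun n => ⟨(leftReg G g)⁻¹ * (n : Equiv.Perm G) * leftReg G g, by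
        apply (hnorm g _).mp
        have : leftReg G g * ((leftReg G g)⁻¹ * (n : Equiv.Perm G) * leftReg G g) *
            (leftReg G g)⁻¹ = (n : Equiv.Perm G) := by group
        rw [this]; exact n.2⟩
      left_inv := fun n => by ext; simp [mul_assoc]
      right_inv := fun n => by ext; simp [mul_assoc]
      map_mul' := fun a b => by ext; simp }
  let ψ : G → (M ≃* M) := fun g => (e.symm.trans (conjAut g)).trans e
  have hfψ : ∀ (g : G) (q : M), f (ψ g q) = leftReg G g * f q * (leftReg G g)⁻¹ := by
    intro g q; simp [hfdef, ψ, conjAut]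
  have hψmem : ∀ (Q : Subgroup M), Q.Characteristic → ∀ (g : G) (q : M),
      q ∈ Q → ψ g q ∈ Q := by
    intro Q hQ g q hq
    have h := hQ.fixed (ψ g)
    have : q ∈ Q.comap (ψ g).toMonoidHom := h.symm ▸ hq
    exact Subgroup.mem_comap.mp this
  -- the value leftReg a x = a * x
  have hlr : ∀ (a x : G), leftReg G a x = a * x := fun a x => rfl
  have heval : ∀ (g : G) (q : M) (x : G), f (ψ g q) x = g * f q (g⁻¹ * x) := by
    intro g q x
    rw [hfψ]
    have h2 : ((leftReg G g)⁻¹ : Equiv.Perm G) x = g⁻¹ * x := by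
      rw [← map_inv]; exact hlr _ _
    simp only [Equiv.Perm.mul_apply, h2, hlr]
  -- the subgroup of G attached to a characteristic subgroup Q
  let toJ : ∀ Q : Subgroup M, Q.Characteristic → Subgroup G := fun Q hQ =>
    { carrier := {g | ∃ q ∈ Q, f q 1 = g}
      one_mem' := ⟨1, Q.one_mem, by simp⟩
      mul_mem' := by
        rintro a b ⟨q, hq, rfl⟩ ⟨r, hr, rfl⟩
        refine ⟨ψ (f q 1) r * q, Q.mul_mem (hψmem Q hQ _ r hr) hq, ?_⟩
        rw [map_mul, Equiv.Perm.mul_apply, heval]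
        simp
      inv_mem' := by
        rintro a ⟨q, hq, rfl⟩
        refine ⟨ψ ((f q 1)⁻¹) q⁻¹, hψmem Q hQ _ _ (Q.inv_mem hq), ?_⟩
        rw [heval]
        have h3 : ((f q)⁻¹ : Equiv.Perm G) ((f q) 1) = 1 := Equiv.symm_apply_apply _ _
        simp [h3] }
  have htoJmem : ∀ (Q : Subgroup M) (hQ : Q.Characteristic) (g : G),
      g ∈ toJ Q hQ ↔ ∃ q ∈ Q, f q 1 = g := fun _ _ _ => Iff.rfl
  -- cardinality
  have hcardJ : ∀ (Q : Subgroup M) (hQ : Q.Characteristic),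
      Nat.card (toJ Q hQ) = Nat.card Q := by
    intro Q hQ
    refine (Nat.card_congr (Equiv.ofBijective
      (fun q : Q => (⟨f q 1, (htoJmem Q hQ _).mpr ⟨q, q.2, rfl⟩⟩ : toJ Q hQ)) ⟨?_, ?_⟩)).symm
    · intro q q' h
      exact Subtype.ext (hkey q q' (congrArg Subtype.val h))
    · rintro ⟨g, hg⟩
      obtain ⟨q, hq, rfl⟩ := (htoJmem Q hQ g).mp hg
      exact ⟨⟨q, hq⟩, rfl⟩
  -- injectivity
  have hinj : ∀ (Q Q' : Subgroup M) (hQ : Q.Characteristic) (hQ' : Q'.Characteristic),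
      toJ Q hQ = toJ Q' hQ' → Q = Q' := by
    have step : ∀ (Q Q' : Subgroup M) (hQ : Q.Characteristic) (hQ' : Q'.Characteristic),
        toJ Q hQ = toJ Q' hQ' → Q ≤ Q' := by
      intro Q Q' hQ hQ' h q hq
      have hmem : f q 1 ∈ toJ Q' hQ' := h ▸ (htoJmem Q hQ _).mpr ⟨q, hq, rfl⟩
      obtain ⟨r, hr, hr1⟩ := (htoJmem Q' hQ' _).mp hmem
      rwa [hkey q r hr1.symm]
    intro Q Q' hQ hQ' h
    exact le_antisymm (step Q Q' hQ hQ' h) (step Q' Q hQ' hQ h.symm)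
  -- conclude
  have : Finite (Subgroup G) := Finite.of_injective
    (fun J : Subgroup G => (J : Set G)) SetLike.coe_injective
  have hle : Nat.card {Q : Subgroup M // Q.Characteristic ∧ Nat.card Q = m} ≤
      Nat.card {J : Subgroup G // Nat.card J = m} := by
    apply Nat.card_le_card_of_injective
      (fun Q => ⟨toJ Q.1 Q.2.1, by rw [hcardJ _ Q.2.1]; exact Q.2.2⟩)
    rintro ⟨Q, hQ, hQm⟩ ⟨Q', hQ', hQm'⟩ h
    exact Subtype.ext (hinj Q Q' hQ hQ' (congrArg Subtype.val h))
  omega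
end

section
/- Let r and s be positive integers, let C_r and C_s be cyclic groups of orders r and s, and let φ : C_s → Aut(C_r) be any homomorphism. Then [C_r ⋊_φ C_s : (C_r ⋊_φ C_s)²] = [C_r : (C_r)²]·[C_s : (C_s)²], and consequently I₂(C_r ⋊_φ C_s) = I₂(C_r)·I₂(C_s) + I₂(C_r) + I₂(C_s). -/
open Function

/-- `G²`: the subgroup of `G` generated by all squares. -/
def squaresSubgroup (G : Type*) [Group G] : Subgroup G :=
  Subgroup.closure {x : G | ∃ g : G, x = g ^ 2}

/-- `I₂(G)`: the number of subgroups of `G` of index 2. -/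
noncomputable def indexTwoCount (G : Type*) [Group G] : ℕ :=
  Nat.card {H : Subgroup G // H.index = 2}

namespace SqAux

lemma squaresSubgroup_map_le {G H : Type*} [Group G] [Group H] (f : G →* H) :
    (squaresSubgroup G).map f ≤ squaresSubgroup H := by
  rw [squaresSubgroup, MonoidHom.map_closure]
  apply Subgroup.closure_mono
  rintro x ⟨y, ⟨g, rfl⟩, rfl⟩
  exact ⟨f g, by simp⟩

lemma mem_squaresSubgroup_map {G H : Type*} [Group G] [Group H] (f : G →* H) {g : G}
    (hg : g ∈ squaresSubgroup G) : f g ∈ squaresSubgroup H :=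
  squaresSubgroup_map_le f ⟨g, hg, rfl⟩

instance squaresSubgroup_normal (G : Type*) [Group G] : (squaresSubgroup G).Normal :=
  ⟨fun n hn g => mem_squaresSubgroup_map (MulAut.conj g).toMonoidHom hn⟩

lemma sq_mem_squaresSubgroup {G : Type*} [Group G] (g : G) : g ^ 2 ∈ squaresSubgroup G :=
  Subgroup.subset_closure ⟨g, rfl⟩

lemma quot_sq_eq_one {G : Type*} [Group G] (q : G ⧸ squaresSubgroup G) : q * q = 1 := by
  induction q using QuotientGroup.induction_on with
  | H g =>
    rw [← QuotientGroup.mk_mul, ← pow_two]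
    exact (QuotientGroup.eq_one_iff _).mpr (sq_mem_squaresSubgroup g)

lemma card_hom_eq_card (Q : Type*) [Group Q] [Finite Q] (hQ : ∀ q : Q, q * q = 1) :
    Nat.card (Q →* Multiplicative (ZMod 2)) = Nat.card Q := by
  letI : CommGroup Q :=
    { mul_comm := fun a b => by
        have h1 := hQ (a * b)
        have : a * b = (a * b)⁻¹ := eq_inv_of_mul_eq_one_left h1
        rw [this, mul_inv_rev, inv_eq_of_mul_eq_one_left (hQ b), inv_eq_of_mul_eq_one_left (hQ a)] }
  letI : Module (ZMod 2) (Additive Q) := AddCommGroup.zmodModule (by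
    intro x
    show (2 : ℕ) • x = 0
    rw [two_nsmul]
    exact hQ x.toMul)
  let e1 : (Q →* Multiplicative (ZMod 2)) ≃ (Additive Q →+ ZMod 2) :=
    { toFun := fun f =>
        { toFun := fun a => (f a.toMul).toAdd
          map_zero' := by simp
          map_add' := fun a b => by simp }
      invFun := fun f =>
        { toFun := fun q => Multiplicative.ofAdd (f (Additive.ofMul q))
          map_one' := by simp
          map_mul' := fun a b => by simp }
      left_inv := fun f => by ext q; simp
      right_inv := fun f => by ext a; simp }
  let e2 : (Additive Q →+ ZMod 2) ≃ (Module.Dual (ZMod 2) (Additive Q)) :=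
    { toFun := fun f => f.toZModLinearMap 2
      invFun := fun f => f.toAddMonoidHom
      left_inv := fun f => rfl
      right_inv := fun f => rfl }
  rw [Nat.card_congr (e1.trans e2)]
  haveI : Module.Finite (ZMod 2) (Additive Q) := Module.Finite.of_finite
  haveI : Finite (Additive Q) := inferInstanceAs (Finite Q)
  haveI : Fintype (Additive Q) := Fintype.ofFinite _
  haveI : Finite (Module.Dual (ZMod 2) (Additive Q)) := Module.finite_of_finite (ZMod 2)
  haveI : Fintype (Module.Dual (ZMod 2) (Additive Q)) := Fintype.ofFinite _
  have : Nat.card Q = Nat.card (Additive Q) := rfl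
  rw [this, Nat.card_eq_fintype_card, Nat.card_eq_fintype_card,
    Module.card_eq_pow_finrank (K := ZMod 2) (V := Module.Dual (ZMod 2) (Additive Q)),
    Subspace.dual_finrank_eq, ← Module.card_eq_pow_finrank (K := ZMod 2) (V := Additive Q)]

lemma squaresSubgroup_le_ker {G : Type*} [Group G] (f : G →* Multiplicative (ZMod 2)) :
    squaresSubgroup G ≤ f.ker := by
  rw [squaresSubgroup, Subgroup.closure_le]
  rintro x ⟨g, rfl⟩
  have : ∀ y : Multiplicative (ZMod 2), y ^ 2 = 1 := by decide
  simp [MonoidHom.mem_ker, this]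

noncomputable def homEquivQuotHom (G : Type*) [Group G] :
    (G →* Multiplicative (ZMod 2)) ≃ ((G ⧸ squaresSubgroup G) →* Multiplicative (ZMod 2)) :=
  { toFun := fun f => QuotientGroup.lift _ f (squaresSubgroup_le_ker f)
    invFun := fun f => f.comp (QuotientGroup.mk' _)
    left_inv := fun f => by ext g; simp
    right_inv := fun f => by ext; simp }

lemma card_hom_eq_index (G : Type*) [Group G] [Finite G] :
    Nat.card (G →* Multiplicative (ZMod 2)) = (squaresSubgroup G).index := by
  rw [Nat.card_congr (homEquivQuotHom G),
    card_hom_eq_card _ (fun q => quot_sq_eq_one q)]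
  rfl

/-- The homomorphism to `C₂` attached to a subgroup of index 2. -/
noncomputable def chi {G : Type*} [Group G] (H : Subgroup G) (hH : H.index = 2) :
    G →* Multiplicative (ZMod 2) := by
  classical
  exact
  { toFun := fun g => if g ∈ H then 1 else Multiplicative.ofAdd 1
    map_one' := by simp [one_mem]
    map_mul' := fun a b => by
      have h := Subgroup.mul_mem_iff_of_index_two hH (a := a) (b := b)
      by_cases ha : a ∈ H <;> by_cases hb : b ∈ H <;>
        simp [ha, hb, h] <;> decide }

lemma chi_ker {G : Type*} [Group G] (H : Subgroup G) (hH : H.index = 2) :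
    (chi H hH).ker = H := by
  classical
  ext g
  simp only [MonoidHom.mem_ker, chi, MonoidHom.coe_mk, OneHom.coe_mk]
  by_cases hg : g ∈ H
  · simp [hg]
  · simp only [hg, if_false]
    constructor
    · intro h; exact absurd h (by decide)
    · exact fun h => h.elim

lemma chi_ne_one {G : Type*} [Group G] (H : Subgroup G) (hH : H.index = 2) :
    chi H hH ≠ 1 := by
  classical
  intro h
  have hHne : H ≠ ⊤ := by
    intro ht
    rw [ht, Subgroup.index_top] at hH
    omega
  obtain ⟨g, hg⟩ : ∃ g, g ∉ H := by
    by_contra hc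
    push_neg at hc
    exact hHne (Subgroup.eq_top_iff' H |>.mpr hc)
  have := congrArg (fun f => f g) h
  simp only [chi, MonoidHom.coe_mk, OneHom.coe_mk, hg, if_false, MonoidHom.one_apply] at this
  exact absurd this (by decide)

lemma index_ker_eq_two {G : Type*} [Group G] (f : G →* Multiplicative (ZMod 2)) (hf : f ≠ 1) :
    f.ker.index = 2 := by
  obtain ⟨g, hg⟩ : ∃ g, f g ≠ 1 := by
    by_contra hc
    push_neg at hc
    exact hf (MonoidHom.ext fun x => hc x)
  have hrange : f.range = ⊤ := by
    rw [Subgroup.eq_top_iff']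
    intro x
    have : ∀ x y : Multiplicative (ZMod 2), y ≠ 1 → x = 1 ∨ x = y := by decide
    rcases this x (f g) hg with h | h
    · rw [h]; exact one_mem _
    · rw [h]; exact ⟨g, rfl⟩
  rw [Subgroup.index_ker, hrange]
  rw [Nat.card_congr (Subgroup.topEquiv.toEquiv)]
  rw [Nat.card_eq_fintype_card]
  decide

lemma indexTwoCount_eq (G : Type*) [Group G] [Finite G] :
    indexTwoCount G = (squaresSubgroup G).index - 1 := by
  classical
  haveI : Finite (G →* Multiplicative (ZMod 2)) :=
    Finite.of_injective (fun f => (f : G → Multiplicative (ZMod 2))) DFunLike.coe_injective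
  haveI : Fintype (G →* Multiplicative (ZMod 2)) := Fintype.ofFinite _
  have e : {H : Subgroup G // H.index = 2} ≃ {f : G →* Multiplicative (ZMod 2) // f ≠ 1} :=
    { toFun := fun H => ⟨chi H.1 H.2, chi_ne_one H.1 H.2⟩
      invFun := fun f => ⟨(f : G →* Multiplicative (ZMod 2)).ker, index_ker_eq_two f.1 f.2⟩
      left_inv := fun H => Subtype.ext (chi_ker H.1 H.2)
      right_inv := fun f => by
        apply Subtype.ext
        ext g
        simp only [chi, MonoidHom.coe_mk, OneHom.coe_mk]
        by_cases hg : (f : G →* Multiplicative (ZMod 2)) g = 1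
        · simp [MonoidHom.mem_ker, hg]
        · have : ∀ y : Multiplicative (ZMod 2), y ≠ 1 → Multiplicative.ofAdd 1 = y := by decide
          simp [MonoidHom.mem_ker, hg, this _ hg] }
  rw [indexTwoCount, Nat.card_congr e, ← card_hom_eq_index G]
  rw [Nat.card_eq_fintype_card, Nat.card_eq_fintype_card]
  have h1 : Fintype.card {f : G →* Multiplicative (ZMod 2) // ¬ (f = 1)} =
      Fintype.card (G →* Multiplicative (ZMod 2)) -
        Fintype.card {f : G →* Multiplicative (ZMod 2) // f = 1} :=
    Fintype.card_subtype_compl _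
  rw [Fintype.card_subtype_eq] at h1
  exact h1

end SqAux
namespace SqAux

lemma mk_aut_eq {Cr : Type*} [Group Cr] [IsCyclic Cr] (e : MulAut Cr) (a : Cr) :
    ((e a : Cr) : Cr ⧸ squaresSubgroup Cr) = (a : Cr ⧸ squaresSubgroup Cr) := by
  obtain ⟨g, hg⟩ := IsCyclic.exists_generator (α := Cr)
  -- first: for the generator
  have key : ((e g : Cr) : Cr ⧸ squaresSubgroup Cr) = (g : Cr ⧸ squaresSubgroup Cr) := by
    set t : Cr ⧸ squaresSubgroup Cr := (g : Cr ⧸ squaresSubgroup Cr) with ht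
    set u : Cr ⧸ squaresSubgroup Cr := ((e g : Cr) : Cr ⧸ squaresSubgroup Cr) with hu
    obtain ⟨m, hm⟩ := Subgroup.mem_zpowers_iff.mp (hg (e.symm g))
    have hgm : g = (e g) ^ m := by
      have := congrArg e hm
      rw [MulEquiv.apply_symm_apply] at this
      conv_lhs => rw [← this]
      rw [map_zpow]
    have htu : t = u ^ m := by
      rw [ht, hgm, hu]
      push_cast [QuotientGroup.mk_zpow]
      rfl
    obtain ⟨n, hn⟩ := Subgroup.mem_zpowers_iff.mp (hg (e g))
    have hut : u = t ^ n := by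
      rw [hu, ← hn, ht]
      push_cast [QuotientGroup.mk_zpow]
      rfl
    have hu2 : u ^ (2 : ℤ) = 1 := by
      have := quot_sq_eq_one u
      rw [← pow_two] at this
      exact_mod_cast this
    have hmod : u ^ m = u ^ (m % 2) := by
      conv_lhs => rw [← Int.emod_add_mul_ediv m 2]
      rw [zpow_add, zpow_mul, hu2, one_zpow, mul_one]
    rcases Int.emod_two_eq m with h | h
    · have ht1 : t = 1 := by rw [htu, hmod, h, zpow_zero]
      have : u = 1 := by rw [hut, ht1, one_zpow]
      rw [this, ht1]
    · rw [htu, hmod, h, zpow_one]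
  obtain ⟨k, hk⟩ := Subgroup.mem_zpowers_iff.mp (hg a)
  rw [← hk, map_zpow]
  push_cast [QuotientGroup.mk_zpow]
  rw [key]

end SqAux

theorem index_squares_semidirectProduct_cyclic
    (r s : ℕ) (hr : 0 < r) (hs : 0 < s)
    (Cr Cs : Type*) [Group Cr] [Group Cs] [IsCyclic Cr] [IsCyclic Cs]
    [Finite Cr] [Finite Cs]
    (hcr : Nat.card Cr = r) (hcs : Nat.card Cs = s)
    (φ : Cs →* MulAut Cr) :
    (squaresSubgroup (Cr ⋊[φ] Cs)).index =
        (squaresSubgroup Cr).index * (squaresSubgroup Cs).index ∧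
      indexTwoCount (Cr ⋊[φ] Cs) =
        indexTwoCount Cr * indexTwoCount Cs + indexTwoCount Cr + indexTwoCount Cs := by
  haveI : Finite (Cr ⋊[φ] Cs) :=
    Finite.of_injective (fun x : Cr ⋊[φ] Cs => (x.left, x.right))
      (fun a b h => by
        obtain ⟨h1, h2⟩ := Prod.mk.injEq .. ▸ h
        exact SemidirectProduct.ext h1 h2)
  let F : (Cr ⋊[φ] Cs) →* (Cr ⧸ squaresSubgroup Cr) × (Cs ⧸ squaresSubgroup Cs) :=
    { toFun := fun x => ((x.left : Cr ⧸ squaresSubgroup Cr), (x.right : Cs ⧸ squaresSubgroup Cs))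
      map_one' := rfl
      map_mul' := fun x y => by
        refine Prod.ext ?_ ?_
        · show ((x.left * φ x.right y.left : Cr) : Cr ⧸ squaresSubgroup Cr) = _
          rw [QuotientGroup.mk_mul, SqAux.mk_aut_eq (φ x.right) y.left]
          rfl
        · show ((x.right * y.right : Cs) : Cs ⧸ squaresSubgroup Cs) = _
          rw [QuotientGroup.mk_mul]
          rfl }
  have hsurj : Surjective F := by
    rintro ⟨q1, q2⟩
    obtain ⟨a, rfl⟩ := QuotientGroup.mk_surjective q1
    obtain ⟨b, rfl⟩ := QuotientGroup.mk_surjective q2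
    exact ⟨⟨a, b⟩, rfl⟩
  have hker : F.ker = squaresSubgroup (Cr ⋊[φ] Cs) := by
    apply le_antisymm
    · intro x hx
      rw [MonoidHom.mem_ker] at hx
      have h1 : x.left ∈ squaresSubgroup Cr :=
        (QuotientGroup.eq_one_iff _).mp (congrArg Prod.fst hx)
      have h2 : x.right ∈ squaresSubgroup Cs :=
        (QuotientGroup.eq_one_iff _).mp (congrArg Prod.snd hx)
      rw [← SemidirectProduct.inl_left_mul_inr_right x]
      exact mul_mem (SqAux.mem_squaresSubgroup_map _ h1) (SqAux.mem_squaresSubgroup_map _ h2)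
    · rw [squaresSubgroup, Subgroup.closure_le]
      rintro x ⟨g, rfl⟩
      rw [SetLike.mem_coe, MonoidHom.mem_ker, map_pow, pow_two]
      exact Prod.ext (SqAux.quot_sq_eq_one _) (SqAux.quot_sq_eq_one _)
  have h1 : (squaresSubgroup (Cr ⋊[φ] Cs)).index =
      (squaresSubgroup Cr).index * (squaresSubgroup Cs).index := by
    rw [← hker, Subgroup.index_ker, MonoidHom.range_eq_top.mpr hsurj,
      Nat.card_congr Subgroup.topEquiv.toEquiv, Nat.card_prod]
    rfl
  refine ⟨h1, ?_⟩
  rw [SqAux.indexTwoCount_eq, SqAux.indexTwoCount_eq, SqAux.indexTwoCount_eq, h1]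
  have hm := Subgroup.index_ne_zero_of_finite (H := squaresSubgroup Cr)
  have hn := Subgroup.index_ne_zero_of_finite (H := squaresSubgroup Cs)
  obtain ⟨m, hm'⟩ := Nat.exists_eq_succ_of_ne_zero hm
  obtain ⟨n, hn'⟩ := Nat.exists_eq_succ_of_ne_zero hn
  rw [hm', hn']
  have : (m + 1) * (n + 1) = m * n + m + n + 1 := by ring
  rw [this]
  simp only [Nat.succ_sub_one]
end

section
/- Let G = A₄ be the alternating group on 4 letters and let λ : G → Perm(G) be the left regular representation. There is no regular subgroup N of Perm(G) such that N is normalized by λ(G) and N is isomorphic to the dicyclic group Q₃ of order 12; that is, R(A₄, [Q₃]) = ∅. -/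
/-- Local abbreviation for `A₄` viewed as a type. -/
abbrev GG : Type := alternatingGroup (Fin 4)

set_option maxHeartbeats 1000000 in
/-- `R(A₄, [Q₃]) = ∅`: no regular subgroup of `Perm(A₄)` normalized by the
left regular representation of `A₄` is isomorphic to the dicyclic group `Q₃`
of order 12. -/
theorem R_A4_Q3_empty :
    ¬ ∃ N : Subgroup (Equiv.Perm (alternatingGroup (Fin 4))),
        IsRegularSubgroup N ∧ NormalizedByLeftReg N ∧
          Nonempty (N ≃* QuaternionGroup 3) := by
  rintro ⟨N, hreg, hnorm, ⟨ψ⟩⟩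
  -- the action of N is free
  have hfree : ∀ f : Equiv.Perm GG, f ∈ N → ∀ x : GG, f x = x → f = 1 := by
    intro f hf x hx
    obtain ⟨n₀, -, hu⟩ := hreg x x
    have h1 : (⟨f, hf⟩ : N) = n₀ := hu ⟨f, hf⟩ hx
    have h2 : (1 : N) = n₀ := hu 1 rfl
    exact congrArg Subtype.val (h1.trans h2.symm)
  have hlr : ∀ g x : GG, leftReg GG g x = g * x := fun g x => rfl
  have hlrinv : ∀ g x : GG, (leftReg GG g)⁻¹ x = g⁻¹ * x := fun g x => by
    rw [← map_inv]; rfl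
  -- transfer of the 6th-power condition through ψ
  have key : ∀ n : N, (n : Equiv.Perm GG) ^ 6 = 1 ↔ (ψ n) ^ 6 = 1 := by
    intro n
    have hc : ((n ^ 6 : N) : Equiv.Perm GG) = (n : Equiv.Perm GG) ^ 6 := rfl
    constructor
    · intro h
      have h0 : (n : N) ^ 6 = 1 := Subtype.ext (by rw [hc, h]; rfl)
      rw [← map_pow, h0, map_one]
    · intro h
      have h0 : ψ (n ^ 6) = 1 := by rw [map_pow, h]
      have h1 : (n : N) ^ 6 = 1 := by
        apply ψ.injective; rw [h0, map_one]
      rw [← hc, h1]; rfl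
  have hmulQ : ∀ x y : QuaternionGroup 3, x ^ 6 = 1 → y ^ 6 = 1 → (x * y) ^ 6 = 1 := by
    decide
  -- product of 6-torsion elements of N is 6-torsion
  have hmul6 : ∀ f g : Equiv.Perm GG, f ∈ N → g ∈ N → f ^ 6 = 1 → g ^ 6 = 1 →
      (f * g) ^ 6 = 1 := by
    intro f g hfN hgN hf6 hg6
    have h1 := (key ⟨f, hfN⟩).mp hf6
    have h2 := (key ⟨g, hgN⟩).mp hg6
    have h4 := key (⟨f, hfN⟩ * ⟨g, hgN⟩ : N)
    rw [map_mul] at h4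
    exact h4.mpr (hmulQ _ _ h1 h2)
  -- the subgroup M = {f ∈ N | f^6 = 1}, of order 6
  set M : Subgroup (Equiv.Perm GG) :=
    { carrier := {f | f ∈ N ∧ f ^ 6 = 1}
      one_mem' := ⟨N.one_mem, one_pow 6⟩
      mul_mem' := by
        rintro f g ⟨hfN, hf6⟩ ⟨hgN, hg6⟩
        exact ⟨N.mul_mem hfN hgN, hmul6 f g hfN hgN hf6 hg6⟩
      inv_mem' := by
        rintro f ⟨hfN, hf6⟩
        exact ⟨N.inv_mem hfN, by rw [inv_pow, hf6, inv_one]⟩ } with hM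
  have hM6 : Nat.card M = 6 := by
    have e : M ≃ {x : QuaternionGroup 3 // x ^ 6 = 1} :=
      { toFun := fun m => ⟨ψ (⟨m.1, m.2.1⟩ : N), (key (⟨m.1, m.2.1⟩ : N)).mp m.2.2⟩
        invFun := fun x =>
          ⟨(ψ.symm x.1 : Equiv.Perm GG), (ψ.symm x.1).2,
            (key _).mpr (by rw [ψ.apply_symm_apply]; exact x.2)⟩
        left_inv := by
          rintro ⟨f, hf⟩
          apply Subtype.ext
          show ((ψ.symm (ψ ⟨f, hf.1⟩) : N) : Equiv.Perm GG) = f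
          rw [ψ.symm_apply_apply]
        right_inv := by
          rintro ⟨x, hx⟩
          apply Subtype.ext
          have h0 : (⟨((ψ.symm x : N) : Equiv.Perm GG), (ψ.symm x).2⟩ : N) = ψ.symm x := rfl
          show ψ (⟨((ψ.symm x : N) : Equiv.Perm GG), (ψ.symm x).2⟩ : N) = x
          rw [h0, ψ.apply_symm_apply] }
    rw [Nat.card_congr e, Nat.card_eq_fintype_card]
    decide
  -- conjugation by leftReg preserves M
  have conj6 : ∀ a f : Equiv.Perm GG, (a * f * a⁻¹) ^ 6 = a * f ^ 6 * a⁻¹ := by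
    intro a f
    rw [← MulAut.conj_apply, ← MulAut.conj_apply, ← map_pow]
  have hMconj : ∀ (g : GG) (f : Equiv.Perm GG), f ∈ M →
      leftReg GG g * f * (leftReg GG g)⁻¹ ∈ M := by
    rintro g f ⟨hfN, hf6⟩
    refine ⟨(hnorm g f).mpr hfN, ?_⟩
    rw [conj6, hf6, mul_one, mul_inv_cancel]
  -- the subgroup H = M • 1 of A₄, of order 6
  set H : Subgroup GG :=
    { carrier := {g : GG | ∃ f ∈ M, f (1 : GG) = g}
      one_mem' := ⟨1, M.one_mem, rfl⟩
      mul_mem' := by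
        rintro x y ⟨f, hf, rfl⟩ ⟨f₂, hf₂, rfl⟩
        refine ⟨leftReg GG (f 1) * f₂ * (leftReg GG (f 1))⁻¹ * f,
          M.mul_mem (hMconj _ _ hf₂) hf, ?_⟩
        show (leftReg GG (f 1) * f₂ * (leftReg GG (f 1))⁻¹ * f) 1 = f 1 * f₂ 1
        rw [Equiv.Perm.mul_apply, Equiv.Perm.mul_apply, Equiv.Perm.mul_apply,
          hlrinv, hlr, inv_mul_cancel]
      inv_mem' := by
        rintro x ⟨f, hf, rfl⟩
        refine ⟨(leftReg GG (f 1))⁻¹ * f⁻¹ * leftReg GG (f 1), ?_, ?_⟩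
        · have h := hMconj (f 1)⁻¹ f⁻¹ (M.inv_mem hf)
          rw [map_inv, inv_inv] at h
          exact h
        · show ((leftReg GG (f 1))⁻¹ * f⁻¹ * leftReg GG (f 1)) 1 = (f 1)⁻¹
          rw [Equiv.Perm.mul_apply, Equiv.Perm.mul_apply, hlr, mul_one,
            Equiv.Perm.inv_def f, Equiv.symm_apply_apply, hlrinv, mul_one] } with hH
  have hH6 : Nat.card H = 6 := by
    have hb : Function.Bijective
        (fun m : M => (⟨(m : Equiv.Perm GG) 1, ⟨m.1, m.2, rfl⟩⟩ : H)) := by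
      constructor
      · rintro ⟨f, hf⟩ ⟨g, hg⟩ h
        have h' : f 1 = g 1 := Subtype.ext_iff.mp h
        have hm : g⁻¹ * f ∈ N := N.mul_mem (N.inv_mem hg.1) hf.1
        have hfix : (g⁻¹ * f) 1 = 1 := by
          rw [Equiv.Perm.mul_apply, h', Equiv.Perm.inv_def g, Equiv.symm_apply_apply]
        have h2 := hfree _ hm _ hfix
        have h3 : g = f := by rwa [inv_mul_eq_one] at h2
        exact Subtype.ext h3.symm
      · rintro ⟨x, f, hf, rfl⟩
        exact ⟨⟨f, hf⟩, Subtype.ext rfl⟩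
    rw [← Nat.card_congr (Equiv.ofBijective _ hb)]
    exact hM6
  have hG12 : Nat.card GG = 12 := by
    rw [Nat.card_eq_fintype_card]; decide
  have hidx : H.index = 2 := by
    have h := Subgroup.card_mul_index H
    rw [hH6, hG12] at h
    omega
  have hsq : ∀ g : GG, g * g ∈ H := fun g => Subgroup.mul_self_mem_of_index_two hidx g
  have h9 : Nat.card {g : GG // ∃ h : GG, h * h = g} = 9 := by
    rw [Nat.card_eq_fintype_card]; decide
  have hsq' : ∀ x : {g : GG // ∃ h : GG, h * h = g}, (x : GG) ∈ H := by
    rintro ⟨x, h, rfl⟩; exact hsq h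
  have hinj : Function.Injective
      (fun x : {g : GG // ∃ h : GG, h * h = g} => (⟨x.1, hsq' x⟩ : H)) := by
    intro a b hab
    have h1 : (a : GG) = (b : GG) := congrArg (fun y : H => (y : GG)) hab
    exact Subtype.ext h1
  have hle := Nat.card_le_card_of_injective _ hinj
  rw [h9, hH6] at hle
  omega
end

section
/- Let G = A₄ be the alternating group on 4 letters and let λ : G → Perm(G) be the left regular representation. There is no regular subgroup N of Perm(G) such that N is normalized by λ(G) and N is cyclic of order 12; that is, R(A₄, [C₁₂]) = ∅. -/
lemma zmod12_mul_inv_sq : ∀ a b : ZMod 12, a * b = 1 → b * b = 1 := by decide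

set_option maxRecDepth 100000 in
lemma A4_squares : ∀ g : alternatingGroup (Fin 4),
    ∃ a b : alternatingGroup (Fin 4), g = a ^ 2 * b ^ 2 := by decide

lemma A4_nonabelian : ¬ ∀ a b : alternatingGroup (Fin 4), a * b = b * a := by decide

/-- Any additive surjective group endomorphism of `ZMod 12` is an involution. -/
lemma zmod12_addHom_sq (f : ZMod 12 →+ ZMod 12) (hf : Function.Surjective f)
    (x : ZMod 12) : f (f x) = x := by
  have key : ∀ y : ZMod 12, f y = y * f 1 := by
    intro y
    have h : f y = f (y.val • (1 : ZMod 12)) := by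
      rw [nsmul_eq_mul, mul_one, ZMod.natCast_val, ZMod.cast_id]
    rw [h, map_nsmul, nsmul_eq_mul, ZMod.natCast_val, ZMod.cast_id]
  obtain ⟨y, hy⟩ := hf 1
  have hy' : y * f 1 = 1 := by rw [← key]; exact hy
  have hsq : f 1 * f 1 = 1 := zmod12_mul_inv_sq y (f 1) hy'
  rw [key x, key (x * f 1), mul_assoc, hsq, mul_one]

/-- Generic core: if a group `G` is generated by (two) squares and has a
regular subgroup `N ≤ Perm G` normalized by `λ(G)` with `N ≅ C₁₂`, then
`G` is abelian. -/
lemma generic_abelian {G : Type*} [Group G]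
    (hsqG : ∀ g : G, ∃ a b : G, g = a ^ 2 * b ^ 2)
    (N : Subgroup (Equiv.Perm G)) (hreg : IsRegularSubgroup N)
    (hnorm : NormalizedByLeftReg N) (e : N ≃* Multiplicative (ZMod 12)) :
    ∀ a b : G, a * b = b * a := by
  -- N is commutative
  have hNcomm : ∀ n m : N, n * m = m * n := by
    intro n m
    apply e.injective
    rw [map_mul, map_mul, mul_comm]
  -- conjugation by λ(g) twice is the identity on N
  have hconj2 : ∀ (g : G) (x : Equiv.Perm G), x ∈ N →
      leftReg G g * (leftReg G g * x * (leftReg G g)⁻¹) * (leftReg G g)⁻¹ = x := by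
    intro g
    set L := leftReg G g with hL
    have hmemInv : ∀ x : Equiv.Perm G, x ∈ N → L⁻¹ * x * L ∈ N := by
      intro x hx
      exact (hnorm g (L⁻¹ * x * L)).mp
        (by rwa [← hL, show L * (L⁻¹ * x * L) * L⁻¹ = x by group])
    let σ : N ≃* N :=
      { toFun := fun n => ⟨L * (n : Equiv.Perm G) * L⁻¹, (hnorm g n).mpr n.2⟩
        invFun := fun n => ⟨L⁻¹ * (n : Equiv.Perm G) * L, hmemInv n n.2⟩
        left_inv := by intro n; ext; simp [mul_assoc]
        right_inv := by intro n; ext; simp [mul_assoc]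
        map_mul' := by intro a b; ext; simp [mul_assoc] }
    let f : ZMod 12 →+ ZMod 12 :=
      { toFun := fun x => Multiplicative.toAdd (e (σ (e.symm (Multiplicative.ofAdd x))))
        map_zero' := by
          simp only [ofAdd_zero, map_one, toAdd_one]
        map_add' := by
          intro x y
          simp only [ofAdd_add, map_mul, toAdd_mul] }
    have hfsurj : Function.Surjective f := by
      intro z
      refine ⟨Multiplicative.toAdd (e (σ.symm (e.symm (Multiplicative.ofAdd z)))), ?_⟩
      simp only [f, AddMonoidHom.coe_mk, ZeroHom.coe_mk, ofAdd_toAdd, MulEquiv.symm_apply_apply,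
        MulEquiv.apply_symm_apply, toAdd_ofAdd]
    have hσ2 : ∀ n : N, σ (σ n) = n := by
      intro n
      have h1 : ∀ m : N,
          σ m = e.symm (Multiplicative.ofAdd (f (Multiplicative.toAdd (e m)))) := by
        intro m
        simp only [f, AddMonoidHom.coe_mk, ZeroHom.coe_mk, ofAdd_toAdd, MulEquiv.symm_apply_apply]
      rw [h1, h1 n, MulEquiv.apply_symm_apply, toAdd_ofAdd,
        zmod12_addHom_sq f hfsurj, ofAdd_toAdd, MulEquiv.symm_apply_apply]
    intro x hx
    have h := hσ2 ⟨x, hx⟩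
    have h2 := congrArg (Subtype.val) h
    simpa [σ, mul_assoc] using h2
  -- λ(g) centralizes N for every g
  have hcent : ∀ (g : G) (x : Equiv.Perm G), x ∈ N → leftReg G g * x = x * leftReg G g := by
    have hsq : ∀ (g : G) (x : Equiv.Perm G), x ∈ N →
        leftReg G (g ^ 2) * x = x * leftReg G (g ^ 2) := by
      intro g x hx
      have h2 := hconj2 g x hx
      have h3 : leftReg G g * leftReg G g * x = x * (leftReg G g * leftReg G g) := by
        have := congrArg (fun y => y * (leftReg G g * leftReg G g)) h2
        simpa [mul_assoc] using this
      simpa [map_pow, pow_two] using h3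
    intro g x hx
    obtain ⟨a, b, hab⟩ := hsqG g
    have ha := hsq a x hx
    have hb := hsq b x hx
    rw [hab, map_mul]
    calc leftReg G (a ^ 2) * leftReg G (b ^ 2) * x
        = leftReg G (a ^ 2) * (leftReg G (b ^ 2) * x) := by rw [mul_assoc]
      _ = leftReg G (a ^ 2) * (x * leftReg G (b ^ 2)) := by rw [hb]
      _ = (leftReg G (a ^ 2) * x) * leftReg G (b ^ 2) := by rw [← mul_assoc]
      _ = x * (leftReg G (a ^ 2) * leftReg G (b ^ 2)) := by rw [ha, mul_assoc]
  -- conclude commutativity of G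
  intro a b
  obtain ⟨n, hn, -⟩ := hreg 1 a
  obtain ⟨m, hm, -⟩ := hreg 1 b
  have h1 : (n : Equiv.Perm G) b = b * a := by
    have h := congrArg (fun p : Equiv.Perm G => p 1) (hcent b n n.2)
    simp only [Equiv.Perm.mul_apply] at h
    have hL1 : (leftReg G b) 1 = b := by simp [leftReg]
    have hLn : (leftReg G b) ((n : Equiv.Perm G) 1) = b * a := by simp [leftReg, hn]
    rw [hL1] at h
    rw [← h, hLn]
  have h2 : (m : Equiv.Perm G) a = a * b := by
    have h := congrArg (fun p : Equiv.Perm G => p 1) (hcent a m m.2)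
    simp only [Equiv.Perm.mul_apply] at h
    have hL1 : (leftReg G a) 1 = a := by simp [leftReg]
    have hLn : (leftReg G a) ((m : Equiv.Perm G) 1) = a * b := by simp [leftReg, hm]
    rw [hL1] at h
    rw [← h, hLn]
  have h3 := congrArg (fun p : N => ((p : Equiv.Perm G)) 1) (hNcomm n m)
  simp only [Subgroup.coe_mul, Equiv.Perm.mul_apply] at h3
  rw [hm, hn, h1, h2] at h3
  exact h3.symm

/-- `R(A₄, [C₁₂]) = ∅`. -/
theorem R_A4_C12_empty :
    ¬ ∃ N : Subgroup (Equiv.Perm (alternatingGroup (Fin 4))),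
        IsRegularSubgroup N ∧ NormalizedByLeftReg N ∧
          Nonempty (N ≃* Multiplicative (ZMod 12)) := by
  rintro ⟨N, hreg, hnorm, ⟨e⟩⟩
  exact A4_nonabelian (generic_abelian A4_squares N hreg hnorm e)
end

section
/- Let G = SL₂(F₃) and let λ : G → Perm(G) be the left regular representation. There is no regular subgroup N of Perm(G) such that N is normalized by λ(G) and N is cyclic of order 24; that is, R(SL₂(F₃), [C₂₄]) = ∅. -/
abbrev SL := Matrix.SpecialLinearGroup (Fin 2) (ZMod 3)

instance : DecidableEq SL := fun a b => decidable_of_iff (a.1 = b.1) ⟨fun h => Subtype.ext h, fun h => h ▸ rfl⟩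

lemma zmod24_sq : ∀ a b : ZMod 24, a * b = 1 → a * a = 1 := by decide

lemma SL_decomp : ∀ g : SL, ∃ x y : SL, x ^ 3 = 1 ∧ g = x * y ^ 2 := by decide

lemma SL_nonab : ∃ a b : SL, a * b ≠ b * a := by decide

/-- Every multiplicative automorphism of `C₂₄` squares to the identity. -/
lemma mulequiv_sq (f : Multiplicative (ZMod 24) ≃* Multiplicative (ZMod 24))
    (x : Multiplicative (ZMod 24)) : f (f x) = x := by
  set t : Multiplicative (ZMod 24) := Multiplicative.ofAdd 1 with ht
  have pow_t : ∀ a : ZMod 24, t ^ a.val = Multiplicative.ofAdd a := by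
    intro a
    rw [ht, ← ofAdd_nsmul, nsmul_eq_mul, mul_one, ZMod.natCast_rightInverse a]
  have hgen : ∀ z : Multiplicative (ZMod 24), t ^ (Multiplicative.toAdd z).val = z := by
    intro z
    rw [pow_t]
    rfl
  set u : ZMod 24 := Multiplicative.toAdd (f t) with hu
  have hft : f t = Multiplicative.ofAdd u := rfl
  -- u is a unit
  obtain ⟨s, hs⟩ : ∃ s, f s = t := ⟨f.symm t, f.apply_symm_apply t⟩
  have hst : ((Multiplicative.toAdd s).val : ZMod 24) * u = 1 := by
    have h1 : f (t ^ (Multiplicative.toAdd s).val) = t := by rw [hgen s, hs]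
    rw [map_pow, hft, ← ofAdd_nsmul, nsmul_eq_mul] at h1
    have := congrArg Multiplicative.toAdd h1
    simpa [ht] using this
  have huu : u * u = 1 := by
    apply zmod24_sq u ((Multiplicative.toAdd s).val : ZMod 24)
    rw [mul_comm]; exact hst
  -- f (f t) = t
  have hfft : f (f t) = t := by
    rw [hft, ← pow_t u, map_pow, hft, ← ofAdd_nsmul, nsmul_eq_mul,
      ZMod.natCast_rightInverse u, huu, ht]
  calc f (f x) = f (f (t ^ (Multiplicative.toAdd x).val)) := by rw [hgen x]
    _ = (f (f t)) ^ (Multiplicative.toAdd x).val := by rw [map_pow, map_pow]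
    _ = t ^ (Multiplicative.toAdd x).val := by rw [hfft]
    _ = x := hgen x

/-- Conjugation by `λ(g)` as an automorphism of a normalized subgroup `N`. -/
def conjEquiv {G : Type*} [Group G] (N : Subgroup (Equiv.Perm G))
    (hNorm : NormalizedByLeftReg N) (g : G) : N ≃* N where
  toFun n := ⟨leftReg G g * ↑n * (leftReg G g)⁻¹, (hNorm g ↑n).mpr n.2⟩
  invFun n := ⟨(leftReg G g)⁻¹ * ↑n * leftReg G g, by
    apply (hNorm g _).mp
    have h : leftReg G g * ((leftReg G g)⁻¹ * ↑n * leftReg G g) * (leftReg G g)⁻¹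
        = (↑n : Equiv.Perm G) := by group
    rw [h]; exact n.2⟩
  left_inv n := Subtype.ext (by
    show (leftReg G g)⁻¹ * (leftReg G g * ↑n * (leftReg G g)⁻¹) * leftReg G g
        = (↑n : Equiv.Perm G)
    group)
  right_inv n := Subtype.ext (by
    show leftReg G g * ((leftReg G g)⁻¹ * ↑n * leftReg G g) * (leftReg G g)⁻¹
        = (↑n : Equiv.Perm G)
    group)
  map_mul' n m := Subtype.ext (by
    show leftReg G g * ↑(n * m) * (leftReg G g)⁻¹
        = (leftReg G g * ↑n * (leftReg G g)⁻¹) * (leftReg G g * ↑m * (leftReg G g)⁻¹)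
    push_cast
    group)

/-- `R(SL₂(F₃), [C₂₄]) = ∅`. -/
theorem R_SL2F3_C24_empty :
    ¬ ∃ N : Subgroup (Equiv.Perm (Matrix.SpecialLinearGroup (Fin 2) (ZMod 3))),
        IsRegularSubgroup N ∧ NormalizedByLeftReg N ∧
          Nonempty (N ≃* Multiplicative (ZMod 24)) := by
  rintro ⟨N, hReg, hNorm, ⟨e⟩⟩
  -- conjugation by every λ(g) squares to the identity on N
  have hsq : ∀ (g : SL) (n : N), conjEquiv N hNorm g (conjEquiv N hNorm g n) = n := by
    intro g n
    have h := mulequiv_sq ((e.symm.trans (conjEquiv N hNorm g)).trans e) (e n)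
    simp only [MulEquiv.trans_apply, MulEquiv.symm_apply_apply] at h
    exact e.injective h
  -- conjugation by λ(x) for x of order dividing 3 is trivial
  have h3 : ∀ x : SL, x ^ 3 = 1 → ∀ n : N, conjEquiv N hNorm x n = n := by
    intro x hx n
    have hP : leftReg SL x * (leftReg SL x * leftReg SL x) = 1 := by
      rw [← map_mul, ← map_mul, show x * (x * x) = x ^ 3 from by rw [pow_succ, pow_succ, pow_one, mul_assoc], hx, map_one]
    have hcube : conjEquiv N hNorm x (conjEquiv N hNorm x (conjEquiv N hNorm x n)) = n := by
      apply Subtype.ext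
      show leftReg SL x * (leftReg SL x * (leftReg SL x * ↑n * (leftReg SL x)⁻¹)
          * (leftReg SL x)⁻¹) * (leftReg SL x)⁻¹ = (↑n : Equiv.Perm SL)
      calc leftReg SL x * (leftReg SL x * (leftReg SL x * ↑n * (leftReg SL x)⁻¹)
          * (leftReg SL x)⁻¹) * (leftReg SL x)⁻¹
          = (leftReg SL x * (leftReg SL x * leftReg SL x)) * ↑n
            * (leftReg SL x * (leftReg SL x * leftReg SL x))⁻¹ := by group
        _ = (↑n : Equiv.Perm SL) := by rw [hP]; group
    calc conjEquiv N hNorm x n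
        = conjEquiv N hNorm x (conjEquiv N hNorm x (conjEquiv N hNorm x n)) :=
          (hsq x (conjEquiv N hNorm x n)).symm
      _ = n := hcube
  -- λ(x) commutes with N for x of order dividing 3
  have hcomm3 : ∀ x : SL, x ^ 3 = 1 → ∀ n : N,
      leftReg SL x * ↑n = ↑n * leftReg SL x := by
    intro x hx n
    have h : leftReg SL x * ↑n * (leftReg SL x)⁻¹ = (↑n : Equiv.Perm SL) :=
      congrArg Subtype.val (h3 x hx n)
    calc leftReg SL x * ↑n
        = (leftReg SL x * ↑n * (leftReg SL x)⁻¹) * leftReg SL x := by group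
      _ = ↑n * leftReg SL x := by rw [h]
  -- λ(g²) commutes with N for every g
  have hcomm2 : ∀ (g : SL) (n : N),
      (leftReg SL g * leftReg SL g) * ↑n = ↑n * (leftReg SL g * leftReg SL g) := by
    intro g n
    have h' : leftReg SL g * (leftReg SL g * ↑n * (leftReg SL g)⁻¹) * (leftReg SL g)⁻¹
        = (↑n : Equiv.Perm SL) := congrArg Subtype.val (hsq g n)
    calc (leftReg SL g * leftReg SL g) * ↑n
        = (leftReg SL g * (leftReg SL g * ↑n * (leftReg SL g)⁻¹) * (leftReg SL g)⁻¹)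
          * (leftReg SL g * leftReg SL g) := by group
      _ = ↑n * (leftReg SL g * leftReg SL g) := by rw [h']
  -- λ(g) commutes with N for all g
  have hcommAll : ∀ (g : SL) (n : N), leftReg SL g * ↑n = ↑n * leftReg SL g := by
    intro g n
    obtain ⟨x, y, hx, hgxy⟩ := SL_decomp g
    rw [hgxy, map_mul, show y ^ 2 = y * y from sq y, map_mul, mul_assoc, hcomm2 y n,
      ← mul_assoc, hcomm3 x hx n, mul_assoc]
  -- N is commutative
  have hcom : ∀ n m : N, (↑n : Equiv.Perm SL) * ↑m = ↑m * ↑n := by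
    intro n m
    have h : n * m = m * n := e.injective (by rw [map_mul, map_mul, mul_comm])
    exact_mod_cast congrArg (Subtype.val) h
  -- every element of N acts as right translation
  have eval : ∀ (g : SL) (k : N), (↑k : Equiv.Perm SL) g = g * ((↑k : Equiv.Perm SL) 1) := by
    intro g k
    have h1 : leftReg SL g 1 = g := mul_one g
    calc (↑k : Equiv.Perm SL) g = (↑k : Equiv.Perm SL) (leftReg SL g 1) := by rw [h1]
      _ = ((↑k * leftReg SL g : Equiv.Perm SL)) 1 := rfl
      _ = ((leftReg SL g * ↑k : Equiv.Perm SL)) 1 := by rw [hcommAll g k]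
      _ = g * ((↑k : Equiv.Perm SL) 1) := rfl
  obtain ⟨a, b, hab⟩ := SL_nonab
  obtain ⟨n, hn, -⟩ := hReg 1 a
  obtain ⟨m, hm, -⟩ := hReg 1 b
  apply hab
  calc a * b = a * ((↑m : Equiv.Perm SL) 1) := by rw [hm]
    _ = (↑m : Equiv.Perm SL) a := (eval a m).symm
    _ = (↑m : Equiv.Perm SL) ((↑n : Equiv.Perm SL) 1) := by rw [hn]
    _ = ((↑m * ↑n : Equiv.Perm SL)) 1 := rfl
    _ = ((↑n * ↑m : Equiv.Perm SL)) 1 := by rw [hcom]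
    _ = (↑n : Equiv.Perm SL) ((↑m : Equiv.Perm SL) 1) := rfl
    _ = (↑n : Equiv.Perm SL) b := by rw [hm]
    _ = b * ((↑n : Equiv.Perm SL) 1) := eval b n
    _ = b * a := by rw [hn]
end

section
/- Let G = S₅ be the symmetric group on 5 letters and let λ : G → Perm(G) be the left regular representation. There is no regular subgroup N of Perm(G) such that N is normalized by λ(G) and N is cyclic of order 120; that is, R(S₅, [C₁₂₀]) = ∅. (This follows because C₁₂₀ has a characteristic subgroup of order 15 while S₅ has no subgroup of order 15.) -/
set_option maxRecDepth 20000 in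
/-- `S₅` has no element of order 15. -/
private lemma aux_no15 : ∀ g : Equiv.Perm (Fin 5), g ^ 15 = 1 → g ^ 5 = 1 ∨ g ^ 3 = 1 := by
  decide

private lemma aux_card120 : Nat.card {w : Multiplicative (ZMod 120) // w ^ 15 = 1} = 15 := by
  rw [Nat.card_eq_fintype_card]; decide

/-- `S₅` has no subgroup of order 15. -/
private lemma aux_no_subgroup_15 (S : Subgroup (Equiv.Perm (Fin 5)))
    (hS : Nat.card S = 15) : False := by
  haveI : Fact (Nat.Prime 3) := ⟨by norm_num⟩
  haveI : Fact (Nat.Prime 5) := ⟨by norm_num⟩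
  haveI : Fintype S := Fintype.ofFinite S
  -- Sylow subgroups of `S` are unique
  have key : ∀ (p : ℕ) (_ : Fact p.Prime), (∀ n : ℕ, n ∣ 15 → n % p = 1 → n = 1) →
      Subsingleton (Sylow p S) := by
    intro p hp hn
    obtain ⟨P⟩ : Nonempty (Sylow p S) := inferInstance
    have h1 : Nat.card (Sylow p S) ∣ (P : Subgroup S).index := Sylow.card_dvd_index P
    have h2 : (P : Subgroup S).index ∣ 15 := hS ▸ Subgroup.index_dvd_card _
    have h3 : Nat.card (Sylow p S) % p = 1 % p := card_sylow_modEq_one p S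
    have hp1 : 1 % p = 1 := Nat.mod_eq_of_lt hp.out.one_lt
    have := hn _ (h1.trans h2) (by omega)
    rw [Nat.card_eq_one_iff_unique] at this
    exact this.1
  haveI h5 : Subsingleton (Sylow 5 S) := key 5 inferInstance (by intro n h1 h2; have := Nat.le_of_dvd (by norm_num) h1; interval_cases n <;> omega)
  haveI h3 : Subsingleton (Sylow 3 S) := key 3 inferInstance (by intro n h1 h2; have := Nat.le_of_dvd (by norm_num) h1; interval_cases n <;> omega)
  -- hence normal
  have normal : ∀ (p : ℕ) (_ : Fact p.Prime) (_ : Subsingleton (Sylow p S)) (P : Sylow p S),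
      (P : Subgroup S).Normal := by
    intro p hp hs P
    refine Subgroup.normalizer_eq_top_iff.mp ((Subgroup.eq_top_iff' _).mpr fun g => ?_)
    exact Sylow.smul_eq_iff_mem_normalizer.mp (Subsingleton.elim _ _)
  -- elements of order 5 and 3 (Cauchy)
  obtain ⟨x, hx⟩ := exists_prime_orderOf_dvd_card (G := S) 5
    (by rw [← Nat.card_eq_fintype_card, hS]; norm_num)
  obtain ⟨y, hy⟩ := exists_prime_orderOf_dvd_card (G := S) 3
    (by rw [← Nat.card_eq_fintype_card, hS]; norm_num)
  have hpgx : IsPGroup 5 (Subgroup.zpowers x) :=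
    IsPGroup.of_card (n := 1) (by rw [Nat.card_zpowers, hx, pow_one])
  have hpgy : IsPGroup 3 (Subgroup.zpowers y) :=
    IsPGroup.of_card (n := 1) (by rw [Nat.card_zpowers, hy, pow_one])
  obtain ⟨P, hP⟩ := hpgx.exists_le_sylow
  obtain ⟨Q, hQ⟩ := hpgy.exists_le_sylow
  have hxP : x ∈ (P : Subgroup S) := hP (Subgroup.mem_zpowers x)
  have hyQ : y ∈ (Q : Subgroup S) := hQ (Subgroup.mem_zpowers y)
  -- the two Sylow subgroups are disjoint
  have hdisj : Disjoint (P : Subgroup S) (Q : Subgroup S) := by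
    rw [Subgroup.disjoint_def]
    intro z hzP hzQ
    have d5 : orderOf z ∣ Nat.card (P : Subgroup S) := Subgroup.orderOf_dvd_natCard _ hzP
    have d3 : orderOf z ∣ Nat.card (Q : Subgroup S) := Subgroup.orderOf_dvd_natCard _ hzQ
    obtain ⟨a, ha⟩ := IsPGroup.iff_card.mp P.isPGroup'
    obtain ⟨b, hb⟩ := IsPGroup.iff_card.mp Q.isPGroup'
    rw [ha] at d5; rw [hb] at d3
    have hco : Nat.Coprime (5 ^ a) (3 ^ b) :=
      Nat.Coprime.pow a b (by norm_num)
    have : orderOf z ∣ 1 := hco ▸ Nat.dvd_gcd d5 d3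
    exact orderOf_eq_one_iff.mp (Nat.dvd_one.mp this)
  have hcomm : Commute x y :=
    Subgroup.commute_of_normal_of_disjoint _ _ (normal 5 inferInstance h5 P)
      (normal 3 inferInstance h3 Q) hdisj x y hxP hyQ
  have h15 : orderOf (x * y) = 15 := by
    rw [Commute.orderOf_mul_eq_mul_orderOf_of_coprime hcomm (by rw [hx, hy]; decide), hx, hy]
  have hg : orderOf ((x * y : S) : Equiv.Perm (Fin 5)) = 15 := by
    rw [Subgroup.orderOf_coe]; exact h15
  have hg15 : ((x * y : S) : Equiv.Perm (Fin 5)) ^ 15 = 1 := by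
    rw [← hg]; exact pow_orderOf_eq_one _
  rcases aux_no15 _ hg15 with h | h
  · have := orderOf_dvd_of_pow_eq_one h; rw [hg] at this; omega
  · have := orderOf_dvd_of_pow_eq_one h; rw [hg] at this; omega

/-- `R(S₅, [C₁₂₀]) = ∅`. -/
theorem R_S5_C120_empty :
    ¬ ∃ N : Subgroup (Equiv.Perm (Equiv.Perm (Fin 5))),
        IsRegularSubgroup N ∧ NormalizedByLeftReg N ∧
          Nonempty (N ≃* Multiplicative (ZMod 120)) := by
  rintro ⟨N, hreg, hnorm, ⟨e⟩⟩
  have happ : ∀ g x : Equiv.Perm (Fin 5), leftReg (Equiv.Perm (Fin 5)) g x = g * x :=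
    fun g x => rfl
  -- `N` is commutative
  have hcomm : ∀ u v : N, u * v = v * u := fun u v =>
    e.injective (by rw [map_mul, map_mul, mul_comm])
  have pow15 : ∀ x y : Equiv.Perm (Equiv.Perm (Fin 5)), x ∈ N → y ∈ N →
      x ^ 15 = 1 → y ^ 15 = 1 → (x * y) ^ 15 = 1 := by
    intro x y hxm hym hx15 hy15
    have h : ((⟨x, hxm⟩ : N) * ⟨y, hym⟩) ^ 15 = (⟨x, hxm⟩ : N) ^ 15 * (⟨y, hym⟩ : N) ^ 15 :=
      Commute.mul_pow (hcomm _ _) 15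
    have h' := congrArg (fun z : N => (z : Equiv.Perm (Equiv.Perm (Fin 5)))) h
    simpa [hx15, hy15] using h'
  -- the image in `S₅` of the subgroup of elements of `N` of order dividing 15
  let T : Set (Equiv.Perm (Fin 5)) :=
    {a | ∃ m : Equiv.Perm (Equiv.Perm (Fin 5)), m ∈ N ∧ m ^ 15 = 1 ∧ m 1 = a}
  have hmul : ∀ a b : Equiv.Perm (Fin 5), a ∈ T → b ∈ T → a * b ∈ T := by
    rintro a b ⟨m, hmN, hm15, hm1⟩ ⟨m', hm'N, hm'15, hm'1⟩
    have hconjN : leftReg _ a * m' * (leftReg _ a)⁻¹ ∈ N := (hnorm a m').mpr hm'N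
    refine ⟨(leftReg _ a * m' * (leftReg _ a)⁻¹) * m, mul_mem hconjN hmN,
      pow15 _ _ hconjN hmN (by rw [conj_pow, hm'15]; group) hm15, ?_⟩
    have hinv : (leftReg (Equiv.Perm (Fin 5)) a)⁻¹ = leftReg (Equiv.Perm (Fin 5)) a⁻¹ :=
      (map_inv _ _).symm
    simp only [Equiv.Perm.mul_apply, hm1, hinv, happ, inv_mul_cancel, hm'1]
  have hT1 : (1 : Equiv.Perm (Fin 5)) ∈ T := ⟨1, one_mem N, one_pow 15, rfl⟩
  have hpow : ∀ a ∈ T, ∀ n : ℕ, a ^ n ∈ T := by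
    intro a ha n
    induction n with
    | zero => simpa using hT1
    | succ n ih => rw [pow_succ]; exact hmul _ _ ih ha
  have hinv : ∀ a ∈ T, a⁻¹ ∈ T := by
    intro a ha
    have hpos : 0 < orderOf a := orderOf_pos a
    have h1 : a ^ (orderOf a - 1) * a = 1 := by
      rw [← pow_succ, Nat.sub_add_cancel hpos, pow_orderOf_eq_one]
    have h2 : a ^ (orderOf a - 1) = a⁻¹ := eq_inv_of_mul_eq_one_left h1
    rw [← h2]; exact hpow a ha _
  let S : Subgroup (Equiv.Perm (Fin 5)) :=
    { carrier := T
      one_mem' := hT1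
      mul_mem' := fun ha hb => hmul _ _ ha hb
      inv_mem' := fun ha => hinv _ ha }
  have hcard : Nat.card S = 15 := by
    have hpow' : ∀ v : N, v ^ 15 = 1 → (v : Equiv.Perm (Equiv.Perm (Fin 5))) ^ 15 = 1 := by
      intro v hv
      have := congrArg (fun z : N => (z : Equiv.Perm (Equiv.Perm (Fin 5)))) hv
      simpa using this
    let f : {v : N // v ^ 15 = 1} → S := fun v =>
      ⟨(v.1 : Equiv.Perm (Equiv.Perm (Fin 5))) 1, v.1.1, v.1.2, hpow' v.1 v.2, rfl⟩
    have hbij : Function.Bijective f := by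
      constructor
      · intro v w hvw
        obtain ⟨n, -, hu⟩ := hreg 1 ((v.1 : Equiv.Perm (Equiv.Perm (Fin 5))) 1)
        have hv := hu v.1 rfl
        have hw := hu w.1 (congrArg Subtype.val hvw).symm
        exact Subtype.ext (hv.trans hw.symm)
      · rintro ⟨a, m, hmN, hm15, hm1⟩
        refine ⟨⟨⟨m, hmN⟩, Subtype.ext (by simpa using hm15)⟩, Subtype.ext ?_⟩
        exact hm1
    calc Nat.card S = Nat.card {v : N // v ^ 15 = 1} := (Nat.card_eq_of_bijective f hbij).symm
      _ = Nat.card {w : Multiplicative (ZMod 120) // w ^ 15 = 1} :=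
          Nat.card_congr (e.toEquiv.subtypeEquiv fun v => by
            change v ^ 15 = 1 ↔ e v ^ 15 = 1
            constructor
            · intro hh; rw [← map_pow, hh, map_one]
            · intro hh; exact e.injective (by rw [map_pow, hh, map_one]))
      _ = 15 := aux_card120
  exact aux_no_subgroup_15 S hcard
end

section
/- Let p be a prime, let G = C_{p⁴} be the cyclic group of order p⁴, and let λ : G → Perm(G) be the left regular representation. There is no regular subgroup N of Perm(G) such that N is normalized by λ(G) and N is isomorphic to C_p × C_{p³}; that is, R(C_{p⁴}, [C_p × C_{p³}]) = ∅. -/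
section zmodHelp
variable {p : ℕ}

lemma pdvd_val (hp : p.Prime) {k : ℕ} (hk : k ≤ 3) (x : ZMod (p^3)) (h : (p:ZMod (p^3))^k ∣ x) :
    p^k ∣ x.val := by
  haveI : NeZero (p^3) := ⟨pow_ne_zero _ hp.pos.ne'⟩
  obtain ⟨y, rfl⟩ := h
  have : ((p:ZMod (p^3))^k * y) = ((p^k * y.val : ℕ) : ZMod (p^3)) := by
    push_cast [ZMod.natCast_val, ZMod.cast_id]; ring
  rw [this, ZMod.val_natCast]
  exact (Nat.dvd_mod_iff (pow_dvd_pow p hk)).mpr ⟨y.val, rfl⟩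

lemma val_pdvd (hp : p.Prime) {k : ℕ} (x : ZMod (p^3)) (h : p^k ∣ x.val) : (p:ZMod (p^3))^k ∣ x := by
  haveI : NeZero (p^3) := ⟨pow_ne_zero _ hp.pos.ne'⟩
  obtain ⟨y, hy⟩ := h
  refine ⟨(y : ZMod (p^3)), ?_⟩
  have : x = ((x.val : ℕ) : ZMod (p^3)) := by rw [ZMod.natCast_val, ZMod.cast_id]
  rw [this, hy]; push_cast; ring

lemma mulp_zero_pd2 (hp : p.Prime) (x : ZMod (p^3)) (h : (p:ZMod (p^3)) * x = 0) :
    (p:ZMod (p^3))^2 ∣ x := by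
  haveI : NeZero (p^3) := ⟨pow_ne_zero _ hp.pos.ne'⟩
  apply val_pdvd hp
  have h1 : ((p * x.val : ℕ) : ZMod (p^3)) = 0 := by
    push_cast [ZMod.natCast_val, ZMod.cast_id]; exact h
  have h2 : p^3 ∣ p * x.val := (ZMod.natCast_eq_zero_iff _ _).mp h1
  have h3 : p * p^2 ∣ p * x.val := by rw [show p * p^2 = p^3 by ring]; exact h2
  exact (Nat.mul_dvd_mul_iff_left hp.pos).mp h3

lemma p3_zero : ((p:ZMod (p^3)))^3 = 0 := by
  have : ((p:ZMod (p^3)))^3 = ((p^3 : ℕ) : ZMod (p^3)) := by push_cast; ring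
  rw [this, ZMod.natCast_self]

end zmodHelp

lemma binom_nilp {R : Type*} [Ring R] (X : R) (hX3 : X^3 = 0) (n : ℕ) :
    (1 + X)^n = 1 + n.choose 1 • X + n.choose 2 • X^2 := by
  induction n with
  | zero => simp
  | succ n ih =>
    have hX3' : X^2 * X = 0 := by rw [← pow_succ]; exact hX3
    rw [pow_succ, ih]
    rw [Nat.choose_succ_succ n 0, Nat.choose_succ_succ n 1]
    simp only [Nat.choose_zero_right, Nat.choose_one_right, add_smul, one_smul]
    rw [add_mul, add_mul, mul_add, mul_add, mul_add, mul_one, mul_one, mul_one,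
      one_mul, smul_mul_assoc, smul_mul_assoc, ← pow_two, hX3', smul_zero]
    abel

lemma geom_nilp {R : Type*} [Ring R] (X : R) (hX3 : X^3 = 0) (n : ℕ) :
    ∑ i ∈ Finset.range n, (1 + X)^i
      = n.choose 1 • (1:R) + n.choose 2 • X + n.choose 3 • X^2 := by
  induction n with
  | zero => simp
  | succ n ih =>
    rw [Finset.sum_range_succ, ih, binom_nilp X hX3 n,
      Nat.choose_succ_succ n 0, Nat.choose_succ_succ n 1, Nat.choose_succ_succ n 2]
    simp only [Nat.choose_zero_right, add_smul, one_smul]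
    abel

lemma key_sum_zero (p : ℕ) (hp : p.Prime)
    (φ : AddMonoid.End (ZMod p × ZMod (p^3))) (hφ : φ ^ (p^4) = 1)
    (m : ZMod p × ZMod (p^3)) :
    ∑ i ∈ Finset.range (p^3), (φ ^ i) m = 0 := by
  haveI hpf : Fact p.Prime := ⟨hp⟩
  haveI : NeZero p := ⟨hp.pos.ne'⟩
  haveI : NeZero (p^3) := ⟨pow_ne_zero _ hp.pos.ne'⟩
  obtain ⟨u, hu⟩ : ∃ u : ZMod p × ZMod (p^3), u = φ ((1:ZMod p), (0:ZMod (p^3))) := ⟨_, rfl⟩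
  obtain ⟨v, hv⟩ : ∃ v : ZMod p × ZMod (p^3), v = φ ((0:ZMod p), (1:ZMod (p^3))) := ⟨_, rfl⟩
  -- decomposition of φ
  have hdec : ∀ x : ZMod p × ZMod (p^3), φ x = x.1.val • u + x.2.val • v := by
    intro x
    have hx : x = x.1.val • ((1:ZMod p), (0:ZMod (p^3)))
        + x.2.val • ((0:ZMod p), (1:ZMod (p^3))) := by
      ext <;> simp [nsmul_eq_mul, ZMod.natCast_val, ZMod.cast_id]
    conv_lhs => rw [hx]
    rw [map_add, map_nsmul, map_nsmul, ← hu, ← hv]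
  have hc1 : ∀ x : ZMod p × ZMod (p^3), (φ x).1 = x.1 * u.1 + (x.2.val : ZMod p) * v.1 := by
    intro x
    rw [hdec x]
    show x.1.val • u.1 + x.2.val • v.1 = _
    simp [nsmul_eq_mul, ZMod.natCast_val, ZMod.cast_id]
  have hc2 : ∀ x : ZMod p × ZMod (p^3), (φ x).2 = (x.1.val : ZMod (p^3)) * u.2 + x.2 * v.2 := by
    intro x
    rw [hdec x]
    show x.1.val • u.2 + x.2.val • v.2 = _
    simp [nsmul_eq_mul, ZMod.natCast_val, ZMod.cast_id]
  -- p kills (1,0), hence p^2 ∣ u.2, and similarly for iterates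
  have h10 : (p:ℕ) • ((1:ZMod p), (0:ZMod (p^3))) = (0 : ZMod p × ZMod (p^3)) := by
    ext <;> simp [nsmul_eq_mul, ZMod.natCast_self]
  have hker : ∀ k : ℕ, (p:ZMod (p^3))^2 ∣ ((φ^k) ((1:ZMod p), (0:ZMod (p^3)))).2 := by
    intro k
    apply mulp_zero_pd2 hp
    have h1 : (p:ℕ) • ((φ^k) ((1:ZMod p), (0:ZMod (p^3)))) = (0 : ZMod p × ZMod (p^3)) := by
      rw [← map_nsmul, h10, map_zero]
    have h2 := congrArg Prod.snd h1
    simpa [nsmul_eq_mul] using h2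
  have hu2 : (p:ZMod (p^3))^2 ∣ u.2 := by
    rw [hu]
    simpa [pow_one] using hker 1
  -- the reduction map ν
  obtain ⟨ν, hν⟩ : ∃ ν : ZMod (p^3) →+* ZMod p,
      ν = ZMod.castHom (dvd_pow_self p (by norm_num : (3:ℕ) ≠ 0)) (ZMod p) := ⟨_, rfl⟩
  have hν_val : ∀ y : ZMod (p^3), ν y = (y.val : ZMod p) := by
    intro y; rw [hν, ZMod.castHom_apply, ← ZMod.natCast_val]
  have hνp : ν (p : ZMod (p^3)) = 0 := by rw [hν, map_natCast, ZMod.natCast_self]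
  have hνdvd : ∀ y : ZMod (p^3), (p:ZMod (p^3)) ∣ y → ν y = 0 := by
    rintro y ⟨z, rfl⟩; rw [map_mul, hνp, zero_mul]
  have hνker : ∀ y : ZMod (p^3), ν y = 0 → (p:ZMod (p^3)) ∣ y := by
    intro y hy
    have h1 : (y.val : ZMod p) = 0 := by rw [← hν_val]; exact hy
    have h2 : p ∣ y.val := (ZMod.natCast_eq_zero_iff _ _).mp h1
    simpa [pow_one] using val_pdvd hp (k := 1) y (by simpa [pow_one] using h2)
  have hdvd_val : ∀ y : ZMod (p^3), (p:ZMod (p^3)) ∣ y → (y.val : ZMod p) = 0 := by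
    intro y hy
    have h2 : p ∣ y.val := by
      simpa [pow_one] using pdvd_val hp (k := 1) (by norm_num) y (by simpa [pow_one] using hy)
    exact (ZMod.natCast_eq_zero_iff _ _).mpr h2
  have hνu2 : ν u.2 = 0 := hνdvd _ (dvd_trans (dvd_pow_self _ (by norm_num : (2:ℕ) ≠ 0)) hu2)
  -- Fermat in ZMod p
  have hFermat : ∀ z : ZMod p, z ^ (p^4) = z := by
    intro z
    have : z ^ (p^4) = (((z^p)^p)^p)^p := by
      rw [← pow_mul, ← pow_mul, ← pow_mul]; ring_nf
    rw [this, ZMod.pow_card, ZMod.pow_card, ZMod.pow_card, ZMod.pow_card]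
  -- second-component eigenvalue is 1 mod p
  have hν2 : ∀ x : ZMod p × ZMod (p^3), ν ((φ x).2) = ν x.2 * ν v.2 := by
    intro x
    rw [hc2, map_add, map_mul, map_mul, hνu2, mul_zero, zero_add]
  have hνk : ∀ k : ℕ, ν (((φ^k) ((0:ZMod p), (1:ZMod (p^3)))).2) = (ν v.2)^k := by
    intro k
    induction k with
    | zero => simp
    | succ k ih =>
      have hstep : (φ^(k+1)) ((0:ZMod p), (1:ZMod (p^3)))
          = φ ((φ^k) ((0:ZMod p), (1:ZMod (p^3)))) :=
        DFunLike.congr_fun (pow_succ' φ k) _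
      rw [hstep, hν2, ih]
      exact (pow_succ _ _).symm
  have hD : ν v.2 = 1 := by
    have h1 := hνk (p^4)
    rw [hφ] at h1
    have h3 : (ν v.2)^(p^4) = 1 := by
      rw [← h1]; simp
    rw [← hFermat (ν v.2), h3]
  have hv2 : (p : ZMod (p^3)) ∣ (v.2 - 1) := by
    apply hνker
    rw [map_sub, hD, map_one, sub_self]
  -- first-component eigenvalue is 1
  have ha1 : ∀ k : ℕ, ((φ^k) ((1:ZMod p), (0:ZMod (p^3)))).1 = u.1^k := by
    intro k
    induction k with
    | zero => simp
    | succ k ih =>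
      have hstep : (φ^(k+1)) ((1:ZMod p), (0:ZMod (p^3)))
          = φ ((φ^k) ((1:ZMod p), (0:ZMod (p^3)))) :=
        DFunLike.congr_fun (pow_succ' φ k) _
      rw [hstep, hc1, ih]
      have hz : ((((φ^k) ((1:ZMod p), (0:ZMod (p^3)))).2.val : ZMod p)) = 0 :=
        hdvd_val _ (dvd_trans (dvd_pow_self _ (by norm_num : (2:ℕ) ≠ 0)) (hker k))
      rw [hz, zero_mul, add_zero]
      exact (pow_succ _ _).symm
  have hu1 : u.1 = 1 := by
    have h1 := ha1 (p^4)
    rw [hφ] at h1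
    have h3 : u.1^(p^4) = 1 := by rw [← h1]; simp
    rw [← hFermat u.1, h3]
  -- the nilpotent part X
  obtain ⟨X, hX⟩ : ∃ X : AddMonoid.End (ZMod p × ZMod (p^3)), X = φ - 1 := ⟨_, rfl⟩
  have hXapp : ∀ x : ZMod p × ZMod (p^3), X x = φ x - x := fun x => by rw [hX]; rfl
  have hXfst : ∀ x : ZMod p × ZMod (p^3), (X x).1 = (x.2.val : ZMod p) * v.1 := by
    intro x
    rw [hXapp x, Prod.fst_sub, hc1, hu1, mul_one]
    ring
  have hXsnd : ∀ x : ZMod p × ZMod (p^3), (X x).2 = (x.1.val : ZMod (p^3)) * u.2 + x.2 * (v.2 - 1) := by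
    intro x
    rw [hXapp x, Prod.snd_sub, hc2]
    ring
  have hpd : (p:ZMod (p^3)) ∣ (p:ZMod (p^3))^2 := dvd_pow_self _ (by norm_num : (2:ℕ) ≠ 0)
  have hXd : ∀ x : ZMod p × ZMod (p^3), (p:ZMod (p^3)) ∣ (X x).2 := by
    intro x
    rw [hXsnd]
    exact dvd_add ((hpd.trans hu2).mul_left _) (hv2.mul_left _)
  have hXXd : ∀ x : ZMod p × ZMod (p^3), (p:ZMod (p^3))^2 ∣ (X (X x)).2 := by
    intro x
    rw [hXsnd (X x)]
    refine dvd_add (hu2.mul_left _) ?_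
    rw [pow_two]
    exact mul_dvd_mul (hXd x) hv2
  have hXX1 : ∀ x : ZMod p × ZMod (p^3), (X (X x)).1 = 0 := by
    intro x
    rw [hXfst, hdvd_val _ (hXd x), zero_mul]
  have hX3 : ∀ x : ZMod p × ZMod (p^3), X (X (X x)) = 0 := by
    intro x
    have h1 : (X (X (X x))).1 = 0 := by
      rw [hXfst, hdvd_val _ (hpd.trans (hXXd x)), zero_mul]
    have h2 : (X (X (X x))).2 = 0 := by
      rw [hXsnd]
      rw [hXX1 x]
      obtain ⟨s, hs⟩ := hXXd x
      obtain ⟨t, ht⟩ := hv2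
      rw [hs, ht]
      have : (p:ZMod (p^3))^2 * s * ((p:ZMod (p^3)) * t) = ((p:ZMod (p^3)))^3 * (s * t) := by
        ring
      rw [ZMod.val_zero]
      push_cast
      rw [this, p3_zero, zero_mul, zero_mul, zero_add]
    exact Prod.ext h1 h2
  have hX3E : X^3 = 0 := by
    refine AddMonoidHom.ext fun x => ?_
    have e3 : X^3 = X * X * X := by simp only [pow_succ, pow_zero, one_mul]
    exact (DFunLike.congr_fun e3 x).trans (hX3 x)
  have hp2X : (p^2) • X = 0 := by
    refine AddMonoidHom.ext fun x => ?_
    show (p^2 : ℕ) • (X x) = 0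
    obtain ⟨t, ht⟩ := hXd x
    ext
    · show (p^2 : ℕ) • (X x).1 = 0
      rw [nsmul_eq_mul]
      push_cast [ZMod.natCast_self]
      ring
    · show (p^2 : ℕ) • (X x).2 = 0
      rw [nsmul_eq_mul, ht]
      push_cast
      have : ((p:ZMod (p^3)))^2 * ((p:ZMod (p^3)) * t) = ((p:ZMod (p^3)))^3 * t := by ring
      rw [this, p3_zero, zero_mul]
  have hpX2 : p • (X * X) = 0 := by
    refine AddMonoidHom.ext fun x => ?_
    show (p : ℕ) • (X (X x)) = 0
    obtain ⟨t, ht⟩ := hXXd x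
    ext
    · show (p : ℕ) • (X (X x)).1 = 0
      rw [hXX1, smul_zero]
    · show (p : ℕ) • (X (X x)).2 = 0
      rw [nsmul_eq_mul, ht]
      push_cast
      have : (p:ZMod (p^3)) * ((p:ZMod (p^3))^2 * t) = ((p:ZMod (p^3)))^3 * t := by ring
      rw [this, p3_zero, zero_mul]
  have hp3one : (p^3) • (1 : AddMonoid.End (ZMod p × ZMod (p^3))) = 0 := by
    refine AddMonoidHom.ext fun x => ?_
    show (p^3 : ℕ) • x = 0
    ext
    · show (p^3 : ℕ) • x.1 = 0
      rw [nsmul_eq_mul]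
      push_cast [ZMod.natCast_self]
      ring
    · show (p^3 : ℕ) • x.2 = 0
      rw [nsmul_eq_mul, ZMod.natCast_self, zero_mul]
  -- binomial divisibilities
  have hC2 : p^2 ∣ (p^3).choose 2 := by
    rcases hp.eq_two_or_odd' with rfl | hodd
    · decide
    · have hle : 1 ≤ p^3 := Nat.one_le_pow _ _ hp.pos
      have heven : 2 ∣ p^3 * (p^3 - 1) := by
        have : Even ((p^3 - 1) * ((p^3 - 1) + 1)) := Nat.even_mul_succ_self _
        rw [Nat.sub_add_cancel hle] at this
        rw [mul_comm]
        exact this.two_dvd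
      have h2 : (p^3).choose 2 * 2 = p^3 * (p^3 - 1) := by
        rw [Nat.choose_two_right, Nat.div_mul_cancel heven]
      have h3 : p^2 ∣ (p^3).choose 2 * 2 := by
        rw [h2]
        exact dvd_mul_of_dvd_left (pow_dvd_pow p (by norm_num)) _
      have hcop : Nat.Coprime (p^2) 2 := by
        apply Nat.Coprime.pow_left
        rw [Nat.coprime_primes hp Nat.prime_two]
        intro h
        rw [h] at hodd
        exact (Nat.not_odd_iff_even.mpr even_two) hodd
      exact hcop.dvd_of_dvd_mul_right h3
  have hC3 : p ∣ (p^3).choose 3 := by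
    refine hp.dvd_choose_pow (k := 3) (n := 3) (by norm_num) ?_
    have h8 : 2^3 ≤ p^3 := Nat.pow_le_pow_left hp.two_le 3
    omega
  -- assemble
  have hφX : φ = 1 + X := by rw [hX]; abel
  have hsum : ∑ i ∈ Finset.range (p^3), φ^i = 0 := by
    rw [hφX, geom_nilp X hX3E]
    obtain ⟨t2, ht2⟩ := hC2
    obtain ⟨t3, ht3⟩ := hC3
    rw [Nat.choose_one_right, ht2, ht3, mul_comm (p^2) t2, mul_comm p t3,
      mul_smul, mul_smul, hp2X, pow_two, hpX2, hp3one, smul_zero, smul_zero]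
    simp
  calc ∑ i ∈ Finset.range (p^3), (φ^i) m
      = (∑ i ∈ Finset.range (p^3), φ^i) m := by
        exact (AddMonoidHom.finset_sum_apply (s := Finset.range (p^3)) (f := fun i => φ^i) (b := m)).symm
    _ = 0 := by rw [hsum]; rfl

/-- `R(C_{p⁴}, [C_p × C_{p³}]) = ∅`. -/
theorem R_Cp4_CpCp3_empty
    (p : ℕ) (hp : p.Prime) :
    ¬ ∃ N : Subgroup (Equiv.Perm (Multiplicative (ZMod (p ^ 4)))),
        IsRegularSubgroup N ∧ NormalizedByLeftReg N ∧
          Nonempty (N ≃* (Multiplicative (ZMod p) × Multiplicative (ZMod (p ^ 3)))) := by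
  rintro ⟨N, hreg, hnorm, ⟨e⟩⟩
  haveI : NeZero (p^4) := ⟨pow_ne_zero _ hp.pos.ne'⟩
  obtain ⟨g0, hg0⟩ : ∃ g : Multiplicative (ZMod (p^4)), orderOf g = p^4 :=
    ⟨Multiplicative.ofAdd 1, by
      show addOrderOf (1 : ZMod (p^4)) = p^4
      exact ZMod.addOrderOf_one (p^4)⟩
  have hreg' : ∀ g : Multiplicative (ZMod (p^4)),
      ∃! n : N, (n : Equiv.Perm (Multiplicative (ZMod (p^4)))) 1 = g := fun g => hreg 1 g
  choose a ha huniq using hreg'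
  have ha' : ∀ g, ((a g : Equiv.Perm (Multiplicative (ZMod (p^4))))) 1 = g := ha
  have ha1 : a 1 = 1 := (huniq 1 1 rfl).symm
  have hcmem : ∀ (g : Multiplicative (ZMod (p^4))) (n : N),
      leftReg _ g * (n : Equiv.Perm _) * (leftReg _ g)⁻¹ ∈ N := fun g n => (hnorm g n).mpr n.2
  obtain ⟨c, hc_coe⟩ : ∃ c : Multiplicative (ZMod (p^4)) → N → N,
      ∀ g n, ((c g n : Equiv.Perm (Multiplicative (ZMod (p^4)))))
        = leftReg _ g * (n : Equiv.Perm _) * (leftReg _ g)⁻¹ :=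
    ⟨fun g n => ⟨_, hcmem g n⟩, fun _ _ => rfl⟩
  have hcmul : ∀ g n n', c g (n * n') = c g n * c g n' := by
    intro g n n'
    apply Subtype.ext
    rw [Subgroup.coe_mul, hc_coe, hc_coe, hc_coe, Subgroup.coe_mul]
    group
  have hccomp : ∀ g h n, c (g * h) n = c g (c h n) := by
    intro g h n
    apply Subtype.ext
    rw [hc_coe, hc_coe, hc_coe, map_mul]
    group
  have hcone : ∀ n, c 1 n = n := by
    intro n
    apply Subtype.ext
    rw [hc_coe, map_one]
    group
  have hLinv : ∀ g : Multiplicative (ZMod (p^4)), (leftReg _ g)⁻¹ = leftReg _ g⁻¹ :=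
    fun g => (map_inv (leftReg _) g).symm
  have hLapp : ∀ g x : Multiplicative (ZMod (p^4)), leftReg _ g x = g * x := fun _ _ => rfl
  have hco : ∀ g h, a (g * h) = c g (a h) * a g := by
    intro g h
    refine (huniq (g * h) _ ?_).symm
    show ((c g (a h) * a g : N) : Equiv.Perm _) 1 = g * h
    rw [Subgroup.coe_mul, hc_coe]
    rw [Equiv.Perm.mul_apply, Equiv.Perm.mul_apply, Equiv.Perm.mul_apply, ha' g, hLinv,
      hLapp, hLapp, inv_mul_cancel, ha' h]
  -- transport to ZMod p × ZMod (p^3)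
  obtain ⟨f0, hf0⟩ : ∃ f0 : N → ZMod p × ZMod (p^3),
      ∀ n, f0 n = (Multiplicative.toAdd ((e n).1), Multiplicative.toAdd ((e n).2)) :=
    ⟨_, fun _ => rfl⟩
  obtain ⟨finv, hfinv⟩ : ∃ finv : ZMod p × ZMod (p^3) → N,
      ∀ x, finv x = e.symm (Multiplicative.ofAdd x.1, Multiplicative.ofAdd x.2) :=
    ⟨_, fun _ => rfl⟩
  have hf0finv : ∀ x, f0 (finv x) = x := by
    intro x
    rw [hfinv, hf0]
    simp
  have hfinvf0 : ∀ n, finv (f0 n) = n := by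
    intro n
    rw [hfinv, hf0]
    simp
  have hf0mul : ∀ n n', f0 (n * n') = f0 n + f0 n' := by
    intro n n'
    rw [hf0, hf0, hf0, map_mul]
    rfl
  have hf01 : f0 1 = 0 := by
    rw [hf0]
    simp
  have hf0inj : Function.Injective f0 := by
    intro n n' h
    have := congrArg finv h
    rwa [hfinvf0, hfinvf0] at this
  -- the additive endomorphism induced by conjugation by g0
  obtain ⟨φ, hφapp⟩ : ∃ φ : AddMonoid.End (ZMod p × ZMod (p^3)),
      ∀ x, φ x = f0 (c g0 (finv x)) := by
    refine ⟨AddMonoidHom.mk' (fun x => f0 (c g0 (finv x))) ?_, fun _ => rfl⟩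
    intro x y
    have h1 : finv (x + y) = finv x * finv y := by
      rw [hfinv, hfinv, hfinv, ← map_mul]
      rfl
    show f0 (c g0 (finv (x + y))) = f0 (c g0 (finv x)) + f0 (c g0 (finv y))
    rw [h1, hcmul, hf0mul]
  have hφpow : ∀ k x, (φ^k) x = f0 (c (g0^k) (finv x)) := by
    intro k
    induction k with
    | zero =>
      intro x
      rw [pow_zero, pow_zero, hcone, hf0finv]
      rfl
    | succ k ih =>
      intro x
      have h1 : (φ^(k+1)) x = φ ((φ^k) x) := DFunLike.congr_fun (pow_succ' φ k) x
      rw [h1, ih, hφapp, hfinvf0, ← hccomp, ← pow_succ']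
  have hφ4 : φ^(p^4) = 1 := by
    refine AddMonoidHom.ext fun x => ?_
    have hpow4 : g0^(p^4) = 1 :=
      orderOf_dvd_iff_pow_eq_one.mp (by rw [hg0])
    refine (hφpow _ x).trans ?_
    rw [hpow4, hcone, hf0finv]
    rfl
  -- the cocycle sum
  have hαpow : ∀ k, f0 (a (g0^k)) = ∑ i ∈ Finset.range k, (φ^i) (f0 (a g0)) := by
    intro k
    induction k with
    | zero =>
      rw [pow_zero, ha1, hf01, Finset.range_zero, Finset.sum_empty]
    | succ k ih =>
      have h1 : g0^(k+1) = g0 * g0^k := pow_succ' g0 k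
      have h2 : f0 (c g0 (a (g0^k))) = φ (f0 (a (g0^k))) := by
        rw [hφapp, hfinvf0]
      rw [h1, hco, hf0mul, h2, ih, map_sum, Finset.sum_range_succ']
      congr 1
      refine Finset.sum_congr rfl fun i _ => ?_
      exact (DFunLike.congr_fun (pow_succ' φ i) (f0 (a g0))).symm
  -- contradiction
  have hkey := key_sum_zero p hp φ hφ4 (f0 (a g0))
  have hfinal : a (g0^(p^3)) = a 1 := by
    apply hf0inj
    rw [hαpow, hkey, ha1, hf01]
  have hg1 : g0^(p^3) = 1 := by
    have h1 := ha' (g0^(p^3))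
    rw [hfinal] at h1
    rw [← h1, ha' 1]
  have hdvd : p^4 ∣ p^3 := by
    have h := orderOf_dvd_of_pow_eq_one hg1
    rwa [hg0] at h
  have hle : p^4 ≤ p^3 := Nat.le_of_dvd (pow_pos hp.pos 3) hdvd
  have := (Nat.pow_le_pow_iff_right hp.one_lt).mp hle
  omega
end
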